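/- arXiv:1604.03175 — 10 statements merged into one kernel-verified Lean document; each statement's English description precedes it below -/
import Mathlib

section
/- Let Y* be a maximizer of F over D2 and Y** a maximizer of L over D2 (both exist, D2 being a nonempty compact set, which we assume nonempty). Then F(Y*) ≥ F(Y**) ≥ (1 − 1/e)·F(Y*). -/
open Finset

/-- Expected caching gain `F(Y)` of the caching network model:
`F(Y) = ∑_{(i,p)∈R} λ_{(i,p)} ∑_{k=1}^{|p|−1} w(p_{k+1}, p_k)·(1 − ∏_{k'=1}^{k} (1 − y_{p_{k'} i}))`
(indices shifted to be 0-based). -/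
noncomputable def cachingGain {V C : Type*} [Fintype V] [Fintype C] [Inhabited V]
    (R : Finset (C × List V)) (lam : C × List V → ℝ) (w : V → V → ℝ)
    (Y : V → C → ℝ) : ℝ :=
  ∑ r ∈ R, lam r *
    ∑ k ∈ Finset.range (r.2.length - 1),
      w (r.2.getD (k + 1) default) (r.2.getD k default) *
        (1 - ∏ k' ∈ Finset.range (k + 1), (1 - Y (r.2.getD k' default) r.1))

/-- Concave relaxation `L(Y)`:
`L(Y) = ∑_{(i,p)∈R} λ_{(i,p)} ∑_{k=1}^{|p|−1} w(p_{k+1}, p_k)·min{1, ∑_{k'=1}^{k} y_{p_{k'} i}}`. -/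
noncomputable def relaxedGain {V C : Type*} [Fintype V] [Fintype C] [Inhabited V]
    (R : Finset (C × List V)) (lam : C × List V → ℝ) (w : V → V → ℝ)
    (Y : V → C → ℝ) : ℝ :=
  ∑ r ∈ R, lam r *
    ∑ k ∈ Finset.range (r.2.length - 1),
      w (r.2.getD (k + 1) default) (r.2.getD k default) *
        min 1 (∑ k' ∈ Finset.range (k + 1), Y (r.2.getD k' default) r.1)

/-- Membership in the relaxed constraint set `D2`. -/
def memD2 {V C : Type*} [Fintype C]
    (c : V → ℕ) (S : C → Finset V) (Y : V → C → ℝ) : Prop :=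
  (∀ v i, 0 ≤ Y v i ∧ Y v i ≤ 1) ∧
  (∀ v, ∑ i, Y v i = (c v : ℝ)) ∧
  (∀ i, ∀ v ∈ S i, Y v i = 1)


lemma aux_one_sub_sum_le_prod (n : ℕ) (y : ℕ → ℝ) (hy : ∀ k, 0 ≤ y k ∧ y k ≤ 1) :
    1 - ∑ k ∈ Finset.range n, y k ≤ ∏ k ∈ Finset.range n, (1 - y k) := by
  induction n with
  | zero => simp
  | succ n ih =>
    rw [Finset.sum_range_succ, Finset.prod_range_succ]
    have h1 : 0 ≤ 1 - y n := by linarith [(hy n).2]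
    have h2 : (1 - ∑ k ∈ Finset.range n, y k) * (1 - y n) ≤
        (∏ k ∈ Finset.range n, (1 - y k)) * (1 - y n) :=
      mul_le_mul_of_nonneg_right ih h1
    have hs : 0 ≤ ∑ k ∈ Finset.range n, y k :=
      Finset.sum_nonneg fun k _ => (hy k).1
    nlinarith [(hy n).1]

lemma aux_key_le (n : ℕ) (y : ℕ → ℝ) (hy : ∀ k, 0 ≤ y k ∧ y k ≤ 1) :
    1 - ∏ k ∈ Finset.range n, (1 - y k) ≤ min 1 (∑ k ∈ Finset.range n, y k) := by
  refine le_min ?_ ?_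
  · have : 0 ≤ ∏ k ∈ Finset.range n, (1 - y k) :=
      Finset.prod_nonneg fun k _ => by linarith [(hy k).2]
    linarith
  · linarith [aux_one_sub_sum_le_prod n y hy]

lemma aux_key_ge (n : ℕ) (y : ℕ → ℝ) (hy : ∀ k, 0 ≤ y k ∧ y k ≤ 1) :
    (1 - (Real.exp 1)⁻¹) * min 1 (∑ k ∈ Finset.range n, y k) ≤
      1 - ∏ k ∈ Finset.range n, (1 - y k) := by
  set s := ∑ k ∈ Finset.range n, y k with hs
  have hs0 : 0 ≤ s := Finset.sum_nonneg fun k _ => (hy k).1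
  have hP : ∏ k ∈ Finset.range n, (1 - y k) ≤ Real.exp (-s) := by
    calc ∏ k ∈ Finset.range n, (1 - y k) ≤ ∏ k ∈ Finset.range n, Real.exp (-(y k)) :=
          Finset.prod_le_prod (fun k _ => by linarith [(hy k).2])
            (fun k _ => by linarith [Real.add_one_le_exp (-(y k))])
      _ = Real.exp (∑ k ∈ Finset.range n, (-(y k))) := (Real.exp_sum _ _).symm
      _ = Real.exp (-s) := by rw [hs, Finset.sum_neg_distrib]
  have hinv : (Real.exp 1)⁻¹ = Real.exp (-1) := (Real.exp_neg 1).symm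
  rcases le_or_gt s 1 with h1 | h1
  · rw [min_eq_right h1]
    have hconv := convexOn_exp.2 (Set.mem_univ (0:ℝ)) (Set.mem_univ (-1:ℝ))
      (by linarith : (0:ℝ) ≤ 1 - s) hs0 (by ring)
    simp only [smul_eq_mul, mul_zero, zero_add, Real.exp_zero, mul_one] at hconv
    have : Real.exp (s * -1) ≤ (1 - s) + s * Real.exp (-1) := by linarith
    rw [mul_neg_one] at this
    rw [hinv]
    nlinarith [hP]
  · rw [min_eq_left h1.le]
    have : Real.exp (-s) ≤ Real.exp (-1) := Real.exp_le_exp.mpr (by linarith)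
    rw [hinv]
    nlinarith [hP]

lemma aux_sandwich {V C : Type*} [Fintype V] [Fintype C] [Inhabited V]
    (R : Finset (C × List V)) (lam : C × List V → ℝ) (w : V → V → ℝ)
    (hlam : ∀ r ∈ R, 0 ≤ lam r) (hw : ∀ u v, 0 ≤ w u v)
    (Y : V → C → ℝ) (hY : ∀ v i, 0 ≤ Y v i ∧ Y v i ≤ 1) :
    (1 - (Real.exp 1)⁻¹) * relaxedGain R lam w Y ≤ cachingGain R lam w Y ∧
      cachingGain R lam w Y ≤ relaxedGain R lam w Y := by
  constructor
  · unfold relaxedGain cachingGain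
    rw [Finset.mul_sum]
    refine Finset.sum_le_sum fun r hr => ?_
    rw [mul_left_comm]
    refine mul_le_mul_of_nonneg_left ?_ (hlam r hr)
    rw [Finset.mul_sum]
    refine Finset.sum_le_sum fun k _ => ?_
    rw [mul_left_comm]
    exact mul_le_mul_of_nonneg_left
      (aux_key_ge (k+1) (fun k' => Y (r.2.getD k' default) r.1)
        (fun k' => hY _ _)) (hw _ _)
  · unfold relaxedGain cachingGain
    refine Finset.sum_le_sum fun r hr => ?_
    refine mul_le_mul_of_nonneg_left ?_ (hlam r hr)
    refine Finset.sum_le_sum fun k _ => ?_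
    exact mul_le_mul_of_nonneg_left
      (aux_key_le (k+1) (fun k' => Y (r.2.getD k' default) r.1)
        (fun k' => hY _ _)) (hw _ _)


/-- if `Y*` maximizes `F` over `D2` and `Y**` maximizes `L` over `D2`, then
`F(Y*) ≥ F(Y**) ≥ (1 − 1/e)·F(Y*)`. -/
theorem stmt0 {V C : Type*} [Fintype V] [Fintype C] [Inhabited V]
    (R : Finset (C × List V)) (lam : C × List V → ℝ) (w : V → V → ℝ)
    (hpath : ∀ r ∈ R, r.2 ≠ []) (hlam : ∀ r ∈ R, 0 ≤ lam r) (hw : ∀ u v, 0 ≤ w u v)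
    (c : V → ℕ) (S : C → Finset V)
    (Ystar Ystar2 : V → C → ℝ)
    (hY1 : memD2 c S Ystar)
    (hY1max : ∀ Y, memD2 c S Y → cachingGain R lam w Y ≤ cachingGain R lam w Ystar)
    (hY2 : memD2 c S Ystar2)
    (hY2max : ∀ Y, memD2 c S Y → relaxedGain R lam w Y ≤ relaxedGain R lam w Ystar2) :
    cachingGain R lam w Ystar2 ≤ cachingGain R lam w Ystar ∧
      (1 - (Real.exp 1)⁻¹) * cachingGain R lam w Ystar ≤ cachingGain R lam w Ystar2 := by
  have h1 := aux_sandwich R lam w hlam hw Ystar hY1.1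
  have h2 := aux_sandwich R lam w hlam hw Ystar2 hY2.1
  refine ⟨hY1max _ hY2, ?_⟩
  have hc : 0 ≤ 1 - (Real.exp 1)⁻¹ := by
    have : 1 ≤ Real.exp 1 := by linarith [Real.add_one_le_exp (1:ℝ)]
    have := inv_le_one_of_one_le₀ this
    linarith
  calc (1 - (Real.exp 1)⁻¹) * cachingGain R lam w Ystar
      ≤ (1 - (Real.exp 1)⁻¹) * relaxedGain R lam w Ystar :=
        mul_le_mul_of_nonneg_left h1.2 hc
    _ ≤ (1 - (Real.exp 1)⁻¹) * relaxedGain R lam w Ystar2 :=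
        mul_le_mul_of_nonneg_left (hY2max _ hY1) hc
    _ ≤ cachingGain R lam w Ystar2 := h2.1
end

section
/- For every Y ∈ [0,1]^{V×C}, (1 − 1/e)·L(Y) ≤ F(Y) ≤ L(Y). -/
open Finset

lemma one_sub_sum_le_prod' (n : ℕ) (y : ℕ → ℝ) (h0 : ∀ k, 0 ≤ y k) (h1 : ∀ k, y k ≤ 1) :
    1 - ∑ k ∈ range n, y k ≤ ∏ k ∈ range n, (1 - y k) := by
  induction n with
  | zero => simp
  | succ n ih =>
    rw [Finset.sum_range_succ, Finset.prod_range_succ]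
    nlinarith [ih, Finset.prod_nonneg (fun k (_ : k ∈ range n) => sub_nonneg.2 (h1 k)),
      Finset.prod_le_one (fun k (_ : k ∈ range n) => sub_nonneg.2 (h1 k))
        (fun k _ => by linarith [h0 k]), sub_nonneg.2 (h1 n), h0 n]

lemma key (n : ℕ) (y : ℕ → ℝ) (h0 : ∀ k, 0 ≤ y k) (h1 : ∀ k, y k ≤ 1) :
    (1 - (Real.exp 1)⁻¹) * min 1 (∑ k ∈ range n, y k) ≤ 1 - ∏ k ∈ range n, (1 - y k) ∧
      1 - ∏ k ∈ range n, (1 - y k) ≤ min 1 (∑ k ∈ range n, y k) := by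
  set s := ∑ k ∈ range n, y k with hs
  have hs0 : 0 ≤ s := Finset.sum_nonneg fun k _ => h0 k
  have hprod0 : 0 ≤ ∏ k ∈ range n, (1 - y k) :=
    Finset.prod_nonneg fun k _ => sub_nonneg.2 (h1 k)
  constructor
  · -- lower bound
    have hpe : ∏ k ∈ range n, (1 - y k) ≤ Real.exp (-s) := by
      rw [hs, ← Finset.sum_neg_distrib, Real.exp_sum]
      exact Finset.prod_le_prod (fun k _ => sub_nonneg.2 (h1 k))
        (fun k _ => by linarith [Real.add_one_le_exp (-(y k))])
    rcases le_total s 1 with h | h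
    · rw [min_eq_right h]
      have hconv := convexOn_exp.2 (Set.mem_univ (0:ℝ)) (Set.mem_univ (-1:ℝ))
        (by linarith : (0:ℝ) ≤ 1 - s) hs0 (by ring)
      simp only [smul_eq_mul, mul_zero, Real.exp_zero, mul_neg, mul_one] at hconv
      rw [Real.exp_neg] at hconv
      rw [zero_add] at hconv
      nlinarith [hpe]
    · rw [min_eq_left h]
      have h2 : Real.exp (-s) ≤ (Real.exp 1)⁻¹ := by
        rw [← Real.exp_neg]; exact Real.exp_le_exp.2 (by linarith)
      linarith
  · refine le_min (by linarith) ?_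
    linarith [one_sub_sum_le_prod' n y h0 h1]


/-- for every `Y ∈ [0,1]^{V×C}`, `(1 − 1/e)·L(Y) ≤ F(Y) ≤ L(Y)`. -/
theorem stmt1 {V C : Type*} [Fintype V] [Fintype C] [Inhabited V]
    (R : Finset (C × List V)) (lam : C × List V → ℝ) (w : V → V → ℝ)
    (hpath : ∀ r ∈ R, r.2 ≠ []) (hlam : ∀ r ∈ R, 0 ≤ lam r) (hw : ∀ u v, 0 ≤ w u v)
    (Y : V → C → ℝ) (hY : ∀ v i, 0 ≤ Y v i ∧ Y v i ≤ 1) :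
    (1 - (Real.exp 1)⁻¹) * relaxedGain R lam w Y ≤ cachingGain R lam w Y ∧
      cachingGain R lam w Y ≤ relaxedGain R lam w Y := by
  have hkey := fun (r : C × List V) (k : ℕ) =>
    key (k + 1) (fun k' => Y (r.2.getD k' default) r.1)
      (fun k' => (hY _ _).1) (fun k' => (hY _ _).2)
  constructor
  · rw [relaxedGain, cachingGain, Finset.mul_sum]
    refine Finset.sum_le_sum fun r hr => ?_
    rw [show (1 - (Real.exp 1)⁻¹) * (lam r * ∑ k ∈ Finset.range (r.2.length - 1),
        w (r.2.getD (k + 1) default) (r.2.getD k default) *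
        min 1 (∑ k' ∈ Finset.range (k + 1), Y (r.2.getD k' default) r.1)) =
      lam r * ∑ k ∈ Finset.range (r.2.length - 1),
        w (r.2.getD (k + 1) default) (r.2.getD k default) *
        ((1 - (Real.exp 1)⁻¹) *
          min 1 (∑ k' ∈ Finset.range (k + 1), Y (r.2.getD k' default) r.1)) by
      simp only [Finset.mul_sum]
      exact Finset.sum_congr rfl fun k _ => by ring]
    refine mul_le_mul_of_nonneg_left (Finset.sum_le_sum fun k _ => ?_) (hlam r hr)
    exact mul_le_mul_of_nonneg_left ((hkey r k).1) (hw _ _)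
  · rw [relaxedGain, cachingGain]
    refine Finset.sum_le_sum fun r hr => ?_
    refine mul_le_mul_of_nonneg_left (Finset.sum_le_sum fun k _ => ?_) (hlam r hr)
    exact mul_le_mul_of_nonneg_left ((hkey r k).2) (hw _ _)
end

section
/- For every integer k ≥ 1 and all real numbers y_1,…,y_k ∈ [0,1], it holds that 1 − ∏_{j=1}^{k}(1 − y_j) ≥ (1 − (1 − 1/k)^k) · min{1, ∑_{j=1}^{k} y_j}. -/
open Finset

/-- Goemans–Williamson inequality: for every integer `k ≥ 1` and
`y_1,…,y_k ∈ [0,1]`, `1 − ∏_{j=1}^{k}(1 − y_j) ≥ (1 − (1 − 1/k)^k) · min{1, ∑_{j=1}^{k} y_j}`. -/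
theorem stmt2 (k : ℕ) (hk : 1 ≤ k) (y : Fin k → ℝ) (hy : ∀ j, 0 ≤ y j ∧ y j ≤ 1) :
    (1 - (1 - 1 / (k : ℝ)) ^ k) * min 1 (∑ j, y j) ≤ 1 - ∏ j, (1 - y j) := by
  set S : ℝ := ∑ j, y j with hS
  have hkpos : (0:ℝ) < (k:ℝ) := by exact_mod_cast hk
  have hS0 : 0 ≤ S := Finset.sum_nonneg fun j _ => (hy j).1
  have hSk : S ≤ (k:ℝ) := by
    calc S ≤ ∑ _j : Fin k, (1:ℝ) := Finset.sum_le_sum fun j _ => (hy j).2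
    _ = (k:ℝ) := by simp
  have hz : ∀ j : Fin k, (0:ℝ) ≤ 1 - y j := fun j => by linarith [(hy j).2]
  have h1k : (0:ℝ) ≤ 1 - 1/(k:ℝ) := by
    have : 1/(k:ℝ) ≤ 1 := by
      rw [div_le_one hkpos]; exact_mod_cast hk
    linarith
  have hSkne : (0:ℝ) ≤ 1 - S/(k:ℝ) := by
    rw [sub_nonneg, div_le_one hkpos]; exact hSk
  -- Step A: AM-GM
  have amgm : ∏ j, (1 - y j) ≤ (1 - S/(k:ℝ)) ^ k := by
    have h := Real.geom_mean_le_arith_mean_weighted Finset.univ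
      (fun _ => 1/(k:ℝ)) (fun j => 1 - y j)
      (fun i _ => by positivity) (by simp [Finset.card_univ]; field_simp)
      (fun i _ => hz i)
    have hlhs : ∏ j, (1 - y j) ^ (1/(k:ℝ)) = (∏ j, (1 - y j)) ^ (1/(k:ℝ)) := by
      rw [← Real.finset_prod_rpow _ _ (fun i _ => hz i)]
    have hrhs : ∑ j, (1/(k:ℝ)) * (1 - y j) = 1 - S/(k:ℝ) := by
      rw [← Finset.mul_sum, Finset.sum_sub_distrib]
      simp [Finset.card_univ, ← hS]
      field_simp
    rw [hlhs, hrhs] at h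
    have hk' : (0:ℝ) < 1/(k:ℝ) := by positivity
    have := Real.rpow_le_rpow (Real.rpow_nonneg (Finset.prod_nonneg fun i _ => hz i) _) h
      (le_of_lt hkpos)
    rwa [← Real.rpow_mul (Finset.prod_nonneg fun i _ => hz i), one_div,
      inv_mul_cancel₀ (ne_of_gt hkpos), Real.rpow_one,
      Real.rpow_natCast (1 - S/(k:ℝ)) k] at this
  rcases le_total 1 S with h1 | h1
  · rw [min_eq_left h1, mul_one]
    have : (1 - S/(k:ℝ)) ^ k ≤ (1 - 1/(k:ℝ)) ^ k := by
      apply pow_le_pow_left₀ hSkne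
      have : 1/(k:ℝ) ≤ S/(k:ℝ) := by gcongr
      linarith
    linarith [amgm.trans this]
  · rw [min_eq_right h1]
    -- convexity of x ^ k
    have hconv := (convexOn_pow (𝕜 := ℝ) k).2 (Set.mem_Ici.mpr (zero_le_one))
      (Set.mem_Ici.mpr h1k) (by linarith : (0:ℝ) ≤ 1 - S) hS0 (by ring)
    have heq : (1 - S) • (1:ℝ) + S • (1 - 1/(k:ℝ)) = 1 - S/(k:ℝ) := by
      simp [smul_eq_mul]; ring
    rw [heq] at hconv
    simp only [smul_eq_mul, one_pow, mul_one] at hconv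
    nlinarith [amgm]
end

section
/- Let n ≥ 1, let c ∈ ℕ with c ≤ n, and let y ∈ [0,1]^n satisfy ∑_{i=1}^{n} y_i = c. Then there exists a probability distribution μ on the finite set {x ∈ {0,1}^n : ∑_{i=1}^{n} x_i = c} whose support has cardinality at most n and whose marginals equal y, i.e., ∑_{x} μ(x)·x_i = y_i for every i ∈ {1,…,n}. -/
open Finset

/-! ### Auxiliary: the sorted enumeration of a finite set of breakpoints in `[0,1)` -/

noncomputable def gfun (B : Finset ℝ) : ℕ → ℝ :=
  fun j => if h : j < B.card then ((B.orderIsoOfFin rfl ⟨j, h⟩ : ℝ)) else 1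

lemma gfun_mem (B : Finset ℝ) (j : ℕ) (h : j < B.card) : gfun B j ∈ B := by
  simp [gfun, dif_pos h, Finset.coe_mem]

lemma gfun_lt_iff (B : Finset ℝ) (j l : ℕ) (hj : j < B.card) (hl : l < B.card) :
    gfun B j < gfun B l ↔ j < l := by
  simp only [gfun, dif_pos hj, dif_pos hl]
  rw [show ((B.orderIsoOfFin rfl ⟨j,hj⟩ : ℝ) < (B.orderIsoOfFin rfl ⟨l,hl⟩ : ℝ))
      ↔ (B.orderIsoOfFin rfl ⟨j,hj⟩ < B.orderIsoOfFin rfl ⟨l,hl⟩) from Iff.rfl,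
    OrderIso.lt_iff_lt, Fin.mk_lt_mk]

lemma gfun_zero (B : Finset ℝ) (h0 : (0:ℝ) ∈ B) (hB : ∀ b ∈ B, 0 ≤ b) : gfun B 0 = 0 := by
  have hm : 0 < B.card := Finset.card_pos.2 ⟨0, h0⟩
  have h1 : 0 ≤ gfun B 0 := hB _ (gfun_mem B 0 hm)
  obtain ⟨l, hl⟩ := (B.orderIsoOfFin rfl).surjective ⟨0, h0⟩
  have hle : (B.orderIsoOfFin rfl) ⟨0, hm⟩ ≤ (B.orderIsoOfFin rfl) l :=
    (B.orderIsoOfFin rfl).monotone (by exact Fin.mk_le_mk.mpr (Nat.zero_le _))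
  have h2 : gfun B 0 ≤ 0 := by
    have h3 := Subtype.coe_le_coe.mpr hle
    rw [hl] at h3
    show (if h : 0 < B.card then ((B.orderIsoOfFin rfl ⟨0, h⟩ : ℝ)) else 1) ≤ 0
    rw [dif_pos hm]
    exact h3
  linarith

lemma gfun_top (B : Finset ℝ) : gfun B B.card = 1 := dif_neg (lt_irrefl _)

lemma gfun_le_one (B : Finset ℝ) (hB : ∀ b ∈ B, b < 1) (j : ℕ) : gfun B j ≤ 1 := by
  by_cases h : j < B.card
  · exact (hB _ (gfun_mem B j h)).le
  · rw [show gfun B j = 1 from dif_neg h]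

lemma gfun_mono (B : Finset ℝ) (hB : ∀ b ∈ B, b < 1) : Monotone (gfun B) := by
  apply monotone_nat_of_le_succ
  intro j
  by_cases h : j + 1 < B.card
  · exact le_of_lt ((gfun_lt_iff B j (j+1) (Nat.lt_of_succ_lt h) h).2 (Nat.lt_succ_self j))
  · rw [show gfun B (j+1) = 1 from dif_neg h]
    exact gfun_le_one B hB j

/-- The fundamental identity: averaging `⌈t - u⌉` against the interval lengths of the
breakpoint partition recovers `t`, provided `fract t` is a breakpoint. -/
lemma gfun_key (B : Finset ℝ) (hB : ∀ b ∈ B, 0 ≤ b ∧ b < 1) (h0 : (0:ℝ) ∈ B)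
    (t : ℝ) (ht : Int.fract t ∈ B) :
    ∑ j ∈ Finset.range B.card, (gfun B (j+1) - gfun B j) * ((⌈t - gfun B j⌉ : ℤ) : ℝ) = t := by
  set m := B.card with hm
  obtain ⟨l, hl⟩ := (B.orderIsoOfFin rfl).surjective ⟨Int.fract t, ht⟩
  have hlm : (l : ℕ) < m := l.isLt
  have glt : gfun B l = Int.fract t := by
    show (if h : (l:ℕ) < B.card then ((B.orderIsoOfFin rfl ⟨l, h⟩ : ℝ)) else 1) = _
    rw [dif_pos hlm]
    have : (⟨(l:ℕ), hlm⟩ : Fin m) = l := rfl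
    rw [this, hl]
  have hceil : ∀ j < m, (⌈t - gfun B j⌉ : ℤ) = ⌊t⌋ + (if j < (l:ℕ) then 1 else 0) := by
    intro j hj
    obtain ⟨hg0, hg1⟩ := hB _ (gfun_mem B j hj)
    have hrw : t - gfun B j = (Int.fract t - gfun B j) + (⌊t⌋ : ℤ) := by
      rw [Int.fract]; ring
    rw [hrw, Int.ceil_add_intCast]
    have hf0 : 0 ≤ Int.fract t := Int.fract_nonneg t
    have hf1 : Int.fract t < 1 := Int.fract_lt_one t
    by_cases hjl : j < (l:ℕ)
    · have hlt : gfun B j < Int.fract t := glt ▸ (gfun_lt_iff B j l hj hlm).2 hjl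
      rw [if_pos hjl]
      have : ⌈Int.fract t - gfun B j⌉ = 1 := by
        rw [Int.ceil_eq_iff]
        constructor <;> push_cast <;> linarith
      omega
    · have hge : Int.fract t ≤ gfun B j := by
        rw [← glt]
        by_contra hcon
        push_neg at hcon
        exact hjl ((gfun_lt_iff B j l hj hlm).1 hcon)
      rw [if_neg hjl]
      have : ⌈Int.fract t - gfun B j⌉ = 0 := by
        rw [Int.ceil_eq_zero_iff]
        constructor
        · simp; linarith
        · simp; linarith
      omega
  have hsum : ∑ j ∈ Finset.range m, (gfun B (j+1) - gfun B j) * ((⌈t - gfun B j⌉ : ℤ) : ℝ)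
      = ∑ j ∈ Finset.range m, ((gfun B (j+1) - gfun B j) * (⌊t⌋ : ℝ)
        + (gfun B (j+1) - gfun B j) * (if j < (l:ℕ) then (1:ℝ) else 0)) := by
    apply Finset.sum_congr rfl
    intro j hj
    rw [hceil j (Finset.mem_range.1 hj)]
    by_cases hjl : j < (l:ℕ) <;> simp [hjl] <;> push_cast <;> ring
  rw [hsum, Finset.sum_add_distrib, ← Finset.sum_mul, Finset.sum_range_sub (gfun B)]
  have e1 : ∀ j : ℕ, (gfun B (j+1) - gfun B j) * (if j < (l:ℕ) then (1:ℝ) else 0)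
      = if j ∈ Finset.range (l:ℕ) then (gfun B (j+1) - gfun B j) else 0 := by
    intro j; by_cases hjl : j < (l:ℕ) <;> simp [hjl]
  simp only [e1]
  rw [Finset.sum_ite_mem, Finset.inter_eq_right.2 (Finset.range_subset_range.2 hlm.le),
    Finset.sum_range_sub (gfun B), gfun_top, gfun_zero B h0 (fun b hb => (hB b hb).1), glt]
  linarith [Int.floor_add_fract t]

/-! ### Auxiliary: prefix sums -/

def Sfun (n : ℕ) (y : Fin n → ℝ) : ℕ → ℝ :=
  fun k => ∑ i : Fin n, if (i : ℕ) < k then y i else 0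

lemma Sfun_step (n : ℕ) (y : Fin n → ℝ) (i : Fin n) :
    Sfun n y ((i:ℕ)+1) - Sfun n y (i:ℕ) = y i := by
  rw [Sfun, Sfun, ← Finset.sum_sub_distrib]
  have key : ∀ j : Fin n, ((if (j:ℕ) < (i:ℕ)+1 then y j else 0) - (if (j:ℕ) < (i:ℕ) then y j else 0))
      = if j = i then y j else 0 := by
    intro j
    have hji : j = i ↔ (j:ℕ) = (i:ℕ) := Fin.ext_iff
    rcases lt_trichotomy (j:ℕ) (i:ℕ) with h | h | h
    · rw [if_pos (by omega), if_pos h, if_neg (by rw [hji]; omega)]; ring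
    · rw [if_pos (by omega), if_neg (by omega), if_pos (hji.mpr h)]; ring
    · rw [if_neg (by omega), if_neg (by omega), if_neg (by rw [hji]; omega)]; ring
  rw [Finset.sum_congr rfl fun j _ => key j]
  simp

/-- any fractional cache state `y ∈ [0,1]^n` with integer total mass `c ≤ n`
is the vector of marginals of a probability distribution over exact-`c` allocations
`x ∈ {0,1}^n`, whose support has at most `n` atoms. -/
theorem stmt4 (n c : ℕ) (hn : 1 ≤ n) (hc : c ≤ n)
    (y : Fin n → ℝ) (hy : ∀ i, 0 ≤ y i ∧ y i ≤ 1) (hsum : ∑ i, y i = (c : ℝ)) :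
    ∃ μ : (Fin n → Bool) → ℝ,
      (∀ x, 0 ≤ μ x) ∧
      (∑ x, μ x = 1) ∧
      (∀ x, μ x ≠ 0 → (∑ i, if x i then (1 : ℕ) else 0) = c) ∧
      {x | μ x ≠ 0}.ncard ≤ n ∧
      (∀ i, ∑ x, μ x * (if x i then (1 : ℝ) else 0) = y i) := by
  set S : ℕ → ℝ := Sfun n y with hSdef
  have hS0 : S 0 = 0 := by simp [hSdef, Sfun]
  have hSn : S n = (c : ℝ) := by
    rw [hSdef, Sfun]
    simp only [Fin.is_lt, if_true]
    exact hsum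
  have hstep : ∀ i : Fin n, S ((i:ℕ)+1) - S (i:ℕ) = y i := fun i => Sfun_step n y i
  -- the breakpoint set
  set B : Finset ℝ := (Finset.range n).image fun k => Int.fract (S k) with hBdef
  have hB : ∀ b ∈ B, 0 ≤ b ∧ b < 1 := by
    intro b hb
    rw [hBdef, Finset.mem_image] at hb
    obtain ⟨k, _, rfl⟩ := hb
    exact ⟨Int.fract_nonneg _, Int.fract_lt_one _⟩
  have h0B : (0:ℝ) ∈ B := by
    rw [hBdef, Finset.mem_image]
    exact ⟨0, Finset.mem_range.2 hn, by rw [hS0, Int.fract_zero]⟩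
  have hfrB : ∀ k ≤ n, Int.fract (S k) ∈ B := by
    intro k hk
    rcases lt_or_eq_of_le hk with h | h
    · rw [hBdef, Finset.mem_image]
      exact ⟨k, Finset.mem_range.2 h, rfl⟩
    · subst h
      rw [hSn, Int.fract_natCast]
      exact h0B
  set m : ℕ := B.card with hmdef
  have hmn : m ≤ n := le_trans (Finset.card_image_le) (by rw [Finset.card_range])
  set g : ℕ → ℝ := gfun B with hgdef
  have hdnn : ∀ j, 0 ≤ g (j+1) - g j := by
    intro j
    have := gfun_mono B (fun b hb => (hB b hb).2) (Nat.le_succ j)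
    linarith
  -- the allocation at offset u
  set X : ℝ → Fin n → Bool :=
    fun u i => decide ((⌈S ((i:ℕ)+1) - u⌉ - ⌈S (i:ℕ) - u⌉ : ℤ) = 1) with hXdef
  have hdiff : ∀ (u : ℝ) (i : Fin n),
      (⌈S ((i:ℕ)+1) - u⌉ - ⌈S (i:ℕ) - u⌉ : ℤ) = 0 ∨ (⌈S ((i:ℕ)+1) - u⌉ - ⌈S (i:ℕ) - u⌉ : ℤ) = 1 := by
    intro u i
    obtain ⟨hy0, hy1⟩ := hy i
    have hst := hstep i
    have h1 : ⌈S (i:ℕ) - u⌉ ≤ ⌈S ((i:ℕ)+1) - u⌉ := Int.ceil_le_ceil (by linarith)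
    have h2 : ⌈S ((i:ℕ)+1) - u⌉ ≤ ⌈(S (i:ℕ) - u) + 1⌉ := Int.ceil_le_ceil (by linarith)
    rw [Int.ceil_add_one] at h2
    omega
  have hXval : ∀ (u : ℝ) (i : Fin n),
      ((if X u i then (1:ℤ) else 0)) = ⌈S ((i:ℕ)+1) - u⌉ - ⌈S (i:ℕ) - u⌉ := by
    intro u i
    rcases hdiff u i with h | h <;> simp [hXdef, h]
  have hcount : ∀ u : ℝ, 0 ≤ u → u < 1 → (∑ i, if X u i then (1:ℕ) else 0) = c := by
    intro u hu0 hu1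
    have hz : (∑ i, if X u i then (1:ℤ) else 0) = (c : ℤ) := by
      calc ∑ i : Fin n, (if X u i then (1:ℤ) else 0)
          = ∑ i : Fin n, (⌈S ((i:ℕ)+1) - u⌉ - ⌈S (i:ℕ) - u⌉) :=
            Finset.sum_congr rfl fun i _ => hXval u i
        _ = ∑ k ∈ Finset.range n, (⌈S (k+1) - u⌉ - ⌈S k - u⌉) :=
            Fin.sum_univ_eq_sum_range (fun k => ⌈S (k+1) - u⌉ - ⌈S k - u⌉) n
        _ = ⌈S n - u⌉ - ⌈S 0 - u⌉ := Finset.sum_range_sub (fun k => ⌈S k - u⌉) n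
        _ = (c : ℤ) := by
            rw [hS0, hSn]
            have h1 : ⌈(c:ℝ) - u⌉ = (c:ℤ) := by
              rw [Int.ceil_eq_iff]
              constructor <;> push_cast <;> linarith
            have h2 : ⌈(0:ℝ) - u⌉ = 0 := by
              rw [Int.ceil_eq_zero_iff]
              constructor
              · simp; linarith
              · simp; linarith
            rw [h1, h2]
            omega
    have hcast : ((∑ i, if X u i then (1:ℕ) else 0 : ℕ) : ℤ) = (c : ℤ) := by
      push_cast
      convert hz using 2
    exact_mod_cast hcast
  -- the distribution
  refine ⟨fun x => ∑ j ∈ Finset.range m, (g (j+1) - g j) * (if X (g j) = x then (1:ℝ) else 0),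
    ?_, ?_, ?_, ?_, ?_⟩
  · intro x
    apply Finset.sum_nonneg
    intro j _
    apply mul_nonneg (hdnn j)
    split <;> norm_num
  · rw [Finset.sum_comm]
    have : ∀ j ∈ Finset.range m,
        (∑ x : Fin n → Bool, (g (j+1) - g j) * (if X (g j) = x then (1:ℝ) else 0))
        = g (j+1) - g j := by
      intro j _
      rw [← Finset.mul_sum, Finset.sum_ite_eq]
      simp
    rw [Finset.sum_congr rfl this, Finset.sum_range_sub g]
    show gfun B B.card - gfun B 0 = 1
    rw [gfun_top, gfun_zero B h0B (fun b hb => (hB b hb).1)]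
    norm_num
  · intro x hx
    have hex : ∃ j ∈ Finset.range m, X (g j) = x := by
      by_contra hcon
      push_neg at hcon
      apply hx
      apply Finset.sum_eq_zero
      intro j hj
      rw [if_neg (hcon j hj), mul_zero]
    obtain ⟨j, hj, hXj⟩ := hex
    obtain ⟨hg0, hg1⟩ := hB _ (gfun_mem B j (Finset.mem_range.1 hj))
    rw [← hXj]
    exact hcount (g j) hg0 hg1
  · have hsub : {x : Fin n → Bool | (∑ j ∈ Finset.range m, (g (j+1) - g j) *
        (if X (g j) = x then (1:ℝ) else 0)) ≠ 0}
        ⊆ ↑((Finset.range m).image fun j => X (g j)) := by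
      intro x hx
      simp only [Set.mem_setOf_eq] at hx
      have hex : ∃ j ∈ Finset.range m, X (g j) = x := by
        by_contra hcon
        push_neg at hcon
        apply hx
        apply Finset.sum_eq_zero
        intro j hj
        rw [if_neg (hcon j hj), mul_zero]
      obtain ⟨j, hj, hXj⟩ := hex
      simp only [Finset.coe_image, Set.mem_image, Finset.mem_coe]
      exact ⟨j, hj, hXj⟩
    calc {x : Fin n → Bool | _ ≠ 0}.ncard
        ≤ (↑((Finset.range m).image fun j => X (g j)) : Set (Fin n → Bool)).ncard :=
          Set.ncard_le_ncard hsub (Set.Finite.ofFinset _ (fun x => Iff.rfl))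
      _ = ((Finset.range m).image fun j => X (g j)).card := Set.ncard_coe_finset _
      _ ≤ m := le_trans Finset.card_image_le (by rw [Finset.card_range])
      _ ≤ n := hmn
  · intro i
    have swap : ∑ x : Fin n → Bool, (∑ j ∈ Finset.range m, (g (j+1) - g j) *
        (if X (g j) = x then (1:ℝ) else 0)) * (if x i then (1:ℝ) else 0)
        = ∑ j ∈ Finset.range m, (g (j+1) - g j) * (if X (g j) i then (1:ℝ) else 0) := by
      have hx : ∀ x : Fin n → Bool,
          (∑ j ∈ Finset.range m, (g (j+1) - g j) * (if X (g j) = x then (1:ℝ) else 0))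
            * (if x i then (1:ℝ) else 0)
          = ∑ j ∈ Finset.range m, (g (j+1) - g j) *
              (if X (g j) = x then (if x i then (1:ℝ) else 0) else 0) := by
        intro x
        rw [Finset.sum_mul]
        refine Finset.sum_congr rfl fun j _ => ?_
        by_cases h : X (g j) = x <;> simp [h]
      rw [Finset.sum_congr rfl fun x _ => hx x, Finset.sum_comm]
      refine Finset.sum_congr rfl fun j _ => ?_
      rw [← Finset.mul_sum]
      congr 1
      rw [Finset.sum_ite_eq]
      simp
    rw [swap]
    have e2 : ∀ j, (g (j+1) - g j) * (if X (g j) i then (1:ℝ) else 0)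
        = (g (j+1) - g j) * ((⌈S ((i:ℕ)+1) - g j⌉ : ℤ) : ℝ)
          - (g (j+1) - g j) * ((⌈S (i:ℕ) - g j⌉ : ℤ) : ℝ) := by
      intro j
      have := hXval (g j) i
      have hcast : (if X (g j) i then (1:ℝ) else 0)
          = ((⌈S ((i:ℕ)+1) - g j⌉ - ⌈S (i:ℕ) - g j⌉ : ℤ) : ℝ) := by
        rw [← this]
        split <;> norm_num
      rw [hcast]
      push_cast
      ring
    rw [Finset.sum_congr rfl fun j _ => e2 j, Finset.sum_sub_distrib,
      gfun_key B hB h0B _ (hfrB ((i:ℕ)+1) i.isLt),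
      gfun_key B hB h0B _ (hfrB (i:ℕ) (le_of_lt (lt_of_lt_of_le i.isLt (le_refl n))))]
    exact hstep i
end

section
/- Assume every request path in R is simple. For each node v ∈ V, let μ_v be a probability distribution on {0,1}^C (a nonnegative weight function summing to 1) with marginals y_{vi} = ∑_{x_v ∈ {0,1}^C} μ_v(x_v)·x_{vi}, i ∈ C, and let Y = (y_{vi}). Then the expectation of F under the product distribution equals F evaluated at the marginals: ∑_{X ∈ ({0,1}^C)^V} (∏_{v∈V} μ_v(X_v)) · F(X) = F(Y), where X_v denotes the row of X indexed by v. -/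
open Finset

lemma expect_prod {V C : Type*} [Fintype V] [Fintype C] [DecidableEq V] [DecidableEq C]
    (μ : V → (C → Bool) → ℝ) (hone : ∀ v, ∑ x, μ v x = 1)
    (g : V → (C → Bool) → ℝ) (T : Finset V) :
    ∑ X : V → C → Bool, (∏ v, μ v (X v)) * ∏ v ∈ T, g v (X v)
      = ∏ v ∈ T, ∑ x, μ v x * g v x := by
  have h1 : ∀ X : V → C → Bool,
      (∏ v, μ v (X v)) * ∏ v ∈ T, g v (X v)
        = ∏ v, (μ v (X v) * if v ∈ T then g v (X v) else 1) := by
    intro X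
    rw [Finset.prod_mul_distrib]
    congr 1
    symm
    rw [Finset.prod_ite_mem, Finset.univ_inter]
  simp_rw [h1]
  rw [← Fintype.prod_sum (fun v x => μ v x * if v ∈ T then g v x else 1)]
  have : ∀ v : V, (∑ x, μ v x * if v ∈ T then g v x else 1)
      = if v ∈ T then (∑ x, μ v x * g v x) else 1 := by
    intro v
    by_cases hv : v ∈ T <;> simp [hv, hone v]
  simp_rw [this]
  rw [Finset.prod_ite_mem, Finset.univ_inter]

lemma key_term {V C : Type*} [Fintype V] [Fintype C] [Inhabited V]
    [DecidableEq V] [DecidableEq C]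
    (μ : V → (C → Bool) → ℝ) (hone : ∀ v, ∑ x, μ v x = 1)
    (Y : V → C → ℝ)
    (hmarg : ∀ v i, Y v i = ∑ x, μ v x * (if x i then (1 : ℝ) else 0))
    (p : List V) (hp : p.Nodup) (i : C) (k : ℕ) (hk : k + 1 ≤ p.length) :
    ∑ X : V → C → Bool,
        (∏ v, μ v (X v)) *
          ∏ k' ∈ Finset.range (k + 1), (1 - if X (p.getD k' default) i then (1:ℝ) else 0)
      = ∏ k' ∈ Finset.range (k + 1), (1 - Y (p.getD k' default) i) := by
  have hinj : Set.InjOn (fun k' => p.getD k' default) (Finset.range (k + 1)) := by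
    intro a ha b hb hab
    simp only [Finset.coe_range, Set.mem_Iio] at ha hb
    have ha' : a < p.length := lt_of_lt_of_le ha hk
    have hb' : b < p.length := lt_of_lt_of_le hb hk
    simp only [List.getD_eq_getElem _ _ ha', List.getD_eq_getElem _ _ hb'] at hab
    exact (List.Nodup.getElem_inj_iff hp).1 hab
  have himg : ∀ f : V → ℝ,
      ∏ k' ∈ Finset.range (k + 1), f (p.getD k' default)
        = ∏ v ∈ (Finset.range (k + 1)).image (fun k' => p.getD k' default), f v := by
    intro f
    rw [Finset.prod_image (fun a ha b hb => hinj ha hb)]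
  have step : ∀ X : V → C → Bool,
      (∏ v, μ v (X v)) *
          ∏ k' ∈ Finset.range (k + 1), (1 - if X (p.getD k' default) i then (1:ℝ) else 0)
        = (∏ v, μ v (X v)) *
          ∏ v ∈ (Finset.range (k + 1)).image (fun k' => p.getD k' default),
            (1 - if X v i then (1:ℝ) else 0) := by
    intro X
    rw [himg (fun v => 1 - if X v i then (1:ℝ) else 0)]
  rw [Finset.sum_congr rfl (fun X _ => step X),
    expect_prod μ hone (fun v x => 1 - if x i then (1:ℝ) else 0),
    himg (fun v => 1 - Y v i)]
  apply Finset.prod_congr rfl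
  intro v _
  rw [hmarg v i]
  simp [mul_sub, Finset.sum_sub_distrib, hone v]

/-- if every request path is simple and cache contents are sampled
independently across nodes from per-node distributions `μ_v` with marginals `Y`,
then the expectation of `F` under the product distribution equals `F(Y)`. -/
theorem stmt5 {V C : Type*} [Fintype V] [Fintype C] [Inhabited V]
    [DecidableEq V] [DecidableEq C]
    (R : Finset (C × List V)) (lam : C × List V → ℝ) (w : V → V → ℝ)
    (hpath : ∀ r ∈ R, r.2 ≠ []) (hlam : ∀ r ∈ R, 0 ≤ lam r) (hw : ∀ u v, 0 ≤ w u v)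
    (hsimple : ∀ r ∈ R, r.2.Nodup)
    (μ : V → (C → Bool) → ℝ)
    (hpos : ∀ v x, 0 ≤ μ v x) (hone : ∀ v, ∑ x, μ v x = 1)
    (Y : V → C → ℝ)
    (hmarg : ∀ v i, Y v i = ∑ x, μ v x * (if x i then (1 : ℝ) else 0)) :
    ∑ X : V → C → Bool,
        (∏ v, μ v (X v)) * cachingGain R lam w (fun v i => if X v i then 1 else 0)
      = cachingGain R lam w Y := by
    classical
  simp only [cachingGain, Finset.mul_sum]
  rw [Finset.sum_comm]
  apply Finset.sum_congr rfl
  intro r hr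
  rw [Finset.sum_comm]
  apply Finset.sum_congr rfl
  intro k hk
  have hk' : k + 1 ≤ r.2.length := by
    simp only [Finset.mem_range] at hk
    omega
  have hstep : ∀ X : V → C → Bool,
      (∏ v, μ v (X v)) * (lam r *
        (w (r.2.getD (k + 1) default) (r.2.getD k default) *
          (1 - ∏ k' ∈ Finset.range (k + 1),
            (1 - if X (r.2.getD k' default) r.1 then (1:ℝ) else 0))))
      = lam r * (w (r.2.getD (k + 1) default) (r.2.getD k default) *
          ((∏ v, μ v (X v)) * (1 - ∏ k' ∈ Finset.range (k + 1),
            (1 - if X (r.2.getD k' default) r.1 then (1:ℝ) else 0)))) := by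
    intro X; ring
  rw [Finset.sum_congr rfl (fun X _ => hstep X), ← Finset.mul_sum, ← Finset.mul_sum]
  congr 2
  have hmu1 : ∑ X : V → C → Bool, ∏ v, μ v (X v) = 1 := by
    have := expect_prod μ hone (fun v x => (1:ℝ)) (∅ : Finset V)
    simpa using this
  simp_rw [mul_sub, mul_one]
  rw [Finset.sum_sub_distrib, hmu1,
    key_term μ hone Y hmarg r.2 (hsimple r hr) r.1 k hk']
end

section
/- Assume every request path in R is simple and, for every v ∈ V, the number of items i with v ∈ S_i is at most c_v and c_v ≤ |C|. Then the following four quantities are equal: (1) max_{X ∈ D1} F(X); (2) max_{Y ∈ D2} F(Y); (3) the supremum over all probability distributions μ on D1 of ∑_{X∈D1} μ(X)·F(X); (4) the supremum over all product-form probability distributions μ supported on D1 of ∑_{X∈D1} μ(X)·F(X). -/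
set_option linter.unusedSectionVars false
set_option linter.unusedVariables false


open Finset

/-- Feasible integral allocation: `X ∈ D1`. -/
def memD1 {V C : Type*} [Fintype C]
    (c : V → ℕ) (S : C → Finset V) (X : V → C → Bool) : Prop :=
  (∀ v, (∑ i, if X v i then (1 : ℕ) else 0) = c v) ∧
  (∀ i, ∀ v ∈ S i, X v i = true)

section AffAux

/-- Affine real functions. -/
def IsAff (f : ℝ → ℝ) : Prop := ∃ a b : ℝ, ∀ s, f s = a + b * s

lemma isAff_const (c : ℝ) : IsAff fun _ => c := ⟨c, 0, fun s => by ring⟩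

lemma isAff_sum {ι : Type*} (t : Finset ι) (f : ι → ℝ → ℝ)
    (h : ∀ x ∈ t, IsAff (f x)) : IsAff fun s => ∑ x ∈ t, f x s := by
  classical
  induction t using Finset.induction with
  | empty => simpa using isAff_const 0
  | @insert a t ha ih =>
    obtain ⟨p, q, hpq⟩ := h a (Finset.mem_insert_self a t)
    obtain ⟨p', q', hpq'⟩ := ih fun x hx => h x (Finset.mem_insert_of_mem hx)
    refine ⟨p + p', q + q', fun s => ?_⟩
    dsimp only
    simp only [Finset.sum_insert ha]
    rw [hpq]
    have := hpq' s
    dsimp only at this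
    rw [this]; ring

lemma isAff_mul_left (c : ℝ) {f : ℝ → ℝ} (h : IsAff f) : IsAff fun s => c * f s := by
  obtain ⟨a, b, hf⟩ := h
  exact ⟨c * a, c * b, fun s => by dsimp only; rw [hf]; ring⟩

lemma isAff_one_sub {f : ℝ → ℝ} (h : IsAff f) : IsAff fun s => 1 - f s := by
  obtain ⟨a, b, hf⟩ := h
  exact ⟨1 - a, -b, fun s => by dsimp only; rw [hf]; ring⟩

lemma isAff_prod_single {ι : Type*} [DecidableEq ι] (A : Finset ι) (g : ι → ℝ → ℝ) (x0 : ι)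
    (hconst : ∀ x ∈ A, x ≠ x0 → ∀ s, g x s = g x 0)
    (haff : ∀ x, IsAff (g x)) : IsAff fun s => ∏ x ∈ A, g x s := by
  by_cases hx : x0 ∈ A
  · obtain ⟨a, b, hf⟩ := haff x0
    refine ⟨a * ∏ x ∈ A.erase x0, g x 0, b * ∏ x ∈ A.erase x0, g x 0, fun s => ?_⟩
    dsimp only
    rw [← Finset.mul_prod_erase A _ hx]
    have hrest : ∏ x ∈ A.erase x0, g x s = ∏ x ∈ A.erase x0, g x 0 :=
      Finset.prod_congr rfl fun x hxx =>
        hconst x (Finset.mem_of_mem_erase hxx) (Finset.ne_of_mem_erase hxx) s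
    rw [hrest, hf]; ring
  · refine ⟨∏ x ∈ A, g x 0, 0, fun s => ?_⟩
    dsimp only
    rw [zero_mul, add_zero]
    exact Finset.prod_congr rfl fun x hxx => hconst x hxx (fun h => hx (h ▸ hxx)) s

lemma isAff_le_max {f : ℝ → ℝ} (h : IsAff f) {lo hi x : ℝ} (h1 : lo ≤ x) (h2 : x ≤ hi) :
    f x ≤ max (f lo) (f hi) := by
  obtain ⟨a, b, hf⟩ := h
  rcases le_total 0 b with hb | hb
  · exact le_max_of_le_right (by rw [hf, hf]; nlinarith)
  · exact le_max_of_le_left (by rw [hf, hf]; nlinarith)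

end AffAux

section Frac

variable {V C : Type*} [Fintype V] [Fintype C] [Inhabited V] [DecidableEq V] [DecidableEq C]

noncomputable def frSet (Y : V → C → ℝ) : Finset (V × C) := by
  classical exact Finset.univ.filter fun p => Y p.1 p.2 ≠ 0 ∧ Y p.1 p.2 ≠ 1

lemma mem_frSet {Y : V → C → ℝ} {p : V × C} :
    p ∈ frSet Y ↔ Y p.1 p.2 ≠ 0 ∧ Y p.1 p.2 ≠ 1 := by
  classical
  simp [frSet]

lemma integral_case (R : Finset (C × List V)) (lam : C × List V → ℝ) (w : V → V → ℝ)
    (c : V → ℕ) (S : C → Finset V) (Y : V → C → ℝ)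
    (h2 : memD2 c S Y) (hfr : frSet Y = ∅) :
    ∃ X : V → C → Bool, memD1 c S X ∧
      cachingGain R lam w Y = cachingGain R lam w (fun v i => if X v i then 1 else 0) := by
  classical
  have hint : ∀ v i, Y v i = 0 ∨ Y v i = 1 := by
    intro v i
    by_contra h
    push_neg at h
    have : (v, i) ∈ frSet Y := mem_frSet.mpr h
    simp [hfr] at this
  refine ⟨fun v i => if Y v i = 1 then true else false, ⟨?_, ?_⟩, ?_⟩
  · intro v
    have hc : ((∑ i, if (if Y v i = 1 then true else false) then (1 : ℕ) else 0 : ℕ) : ℝ)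
        = ((c v : ℕ) : ℝ) := by
      rw [← h2.2.1 v]
      push_cast
      refine Finset.sum_congr rfl fun i _ => ?_
      rcases hint v i with h | h <;> simp [h]
    exact_mod_cast hc
  · intro i v hv
    simp [h2.2.2 i v hv]
  · have hYe : (fun v i => if (if Y v i = 1 then true else false) then (1 : ℝ) else 0) = Y := by
      funext v i
      rcases hint v i with h | h <;> simp [h]
    rw [hYe]

lemma exists_feasible (c : V → ℕ) (S : C → Finset V)
    (hS : ∀ v : V, (Finset.univ.filter (fun i : C => v ∈ S i)).card ≤ c v)
    (hcap : ∀ v : V, c v ≤ Fintype.card C) :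
    ∃ X : V → C → Bool, memD1 c S X := by
  classical
  have h : ∀ v : V, ∃ t : Finset C, (Finset.univ.filter fun i => v ∈ S i) ⊆ t ∧ t.card = c v := by
    intro v
    obtain ⟨u, hsu, _, hcard⟩ := Finset.exists_subsuperset_card_eq
      (Finset.subset_univ (Finset.univ.filter fun i => v ∈ S i)) (hS v)
      (by simpa using hcap v)
    exact ⟨u, hsu, hcard⟩
  choose t ht using h
  refine ⟨fun v i => decide (i ∈ t v), fun v => ?_, fun i v hv => ?_⟩
  · calc (∑ i, if decide (i ∈ t v) then (1 : ℕ) else 0) = (t v).card := by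
          simp only [decide_eq_true_eq]
          rw [Finset.sum_ite_mem, Finset.univ_inter, Finset.card_eq_sum_ones]
      _ = c v := (ht v).2
  · simp only [decide_eq_true_eq]
    exact (ht v).1 (Finset.mem_filter.mpr ⟨Finset.mem_univ i, hv⟩)

lemma memD2_embed (c : V → ℕ) (S : C → Finset V) {X : V → C → Bool} (hX : memD1 c S X) :
    memD2 c S (fun v i => if X v i then (1 : ℝ) else 0) := by
  refine ⟨fun v i => ?_, fun v => ?_, fun i v hv => ?_⟩
  · dsimp only; split_ifs <;> norm_num
  · dsimp only
    rw [← hX.1 v]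
    push_cast
    exact Finset.sum_congr rfl fun i _ => by split_ifs <;> simp
  · simp [hX.2 i v hv]

end Frac
section Round

variable {V C : Type*} [Fintype V] [Fintype C] [Inhabited V] [DecidableEq V] [DecidableEq C]

set_option maxHeartbeats 1000000 in
lemma round_lemma (R : Finset (C × List V)) (lam : C × List V → ℝ) (w : V → V → ℝ)
    (hsimple : ∀ r ∈ R, r.2.Nodup)
    (c : V → ℕ) (S : C → Finset V) :
    ∀ n (Y : V → C → ℝ), memD2 c S Y → (frSet Y).card ≤ n →
      ∃ X : V → C → Bool, memD1 c S X ∧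
        cachingGain R lam w Y ≤ cachingGain R lam w (fun v i => if X v i then 1 else 0) := by
  intro n
  induction n with
  | zero =>
    intro Y h2 hcard
    have hfr : frSet Y = ∅ := Finset.card_eq_zero.mp (Nat.le_zero.mp hcard)
    obtain ⟨X, hX, heq⟩ := integral_case R lam w c S Y h2 hfr
    exact ⟨X, hX, heq.le⟩
  | succ n ih =>
    intro Y h2 hcard
    classical
    by_cases hfr : frSet Y = ∅
    · obtain ⟨X, hX, heq⟩ := integral_case R lam w c S Y h2 hfr
      exact ⟨X, hX, heq.le⟩
    obtain ⟨⟨v, i⟩, hvi⟩ := Finset.nonempty_of_ne_empty hfr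
    have hYvi : Y v i ≠ 0 ∧ Y v i ≠ 1 := mem_frSet.mp hvi
    -- find a second fractional item in row v
    have hjex : ∃ j, j ≠ i ∧ Y v j ≠ 0 ∧ Y v j ≠ 1 := by
      by_contra hc
      push_neg at hc
      have hint : ∀ j ∈ Finset.univ.erase i, Y v j = 0 ∨ Y v j = 1 := by
        intro j hj
        rcases eq_or_ne (Y v j) 0 with h | h
        · exact Or.inl h
        · exact Or.inr (hc j (Finset.mem_erase.mp hj).1 h)
      have hsum : ∑ j ∈ Finset.univ.erase i, Y v j
          = (((Finset.univ.erase i).filter (fun j => Y v j = 1)).card : ℝ) := by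
        rw [Finset.card_filter]
        push_cast
        refine Finset.sum_congr rfl fun j hj => ?_
        rcases hint j hj with h | h <;> simp [h]
      have hsplit : Y v i + ∑ j ∈ Finset.univ.erase i, Y v j = (c v : ℝ) := by
        rw [← h2.2.1 v]
        exact Finset.add_sum_erase Finset.univ (fun j => Y v j) (Finset.mem_univ i)
      set m := ((Finset.univ.erase i).filter (fun j => Y v j = 1)).card with hm
      have h0 : 0 < Y v i := lt_of_le_of_ne (h2.1 v i).1 (Ne.symm hYvi.1)
      have h1 : Y v i < 1 := lt_of_le_of_ne (h2.1 v i).2 hYvi.2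
      have hYeq : Y v i = (c v : ℝ) - m := by rw [← hsplit, hsum]; ring
      have hmc : (m : ℝ) < (c v : ℝ) := by rw [hYeq] at h0; linarith
      have hcm : (c v : ℝ) < (m : ℝ) + 1 := by rw [hYeq] at h1; linarith
      have h1' : m < c v := by exact_mod_cast hmc
      have h2' : c v < m + 1 := by exact_mod_cast hcm
      omega
    obtain ⟨j, hji, hYvj⟩ := hjex
    have h0i : 0 < Y v i := lt_of_le_of_ne (h2.1 v i).1 (Ne.symm hYvi.1)
    have h1i : Y v i < 1 := lt_of_le_of_ne (h2.1 v i).2 hYvi.2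
    have h0j : 0 < Y v j := lt_of_le_of_ne (h2.1 v j).1 (Ne.symm hYvj.1)
    have h1j : Y v j < 1 := lt_of_le_of_ne (h2.1 v j).2 hYvj.2
    set T : ℝ := Y v i + Y v j with hTdef
    set Z : ℝ → V → C → ℝ := fun s v' i' =>
      if v' = v ∧ i' = i then s else if v' = v ∧ i' = j then T - s else Y v' i' with hZdef
    have hZvi : ∀ s, Z s v i = s := by
      intro s
      simp only [hZdef]
      simp
    have hZvj : ∀ s, Z s v j = T - s := by
      intro s
      simp only [hZdef]
      simp [hji]
    have hZother : ∀ s v' i', ¬(v' = v ∧ i' = i) → ¬(v' = v ∧ i' = j) → Z s v' i' = Y v' i' := by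
      intro s v' i' hA hB
      simp only [hZdef]
      rw [if_neg hA, if_neg hB]
    have hZY : Z (Y v i) = Y := by
      funext v' i'
      by_cases hA : v' = v ∧ i' = i
      · rw [hA.1, hA.2, hZvi]
      · by_cases hB : v' = v ∧ i' = j
        · rw [hB.1, hB.2, hZvj, hTdef]; ring
        · exact hZother _ _ _ hA hB
    -- membership in D2 along the segment
    have hZmem : ∀ s, 0 ≤ s → s ≤ 1 → 0 ≤ T - s → T - s ≤ 1 → memD2 c S (Z s) := by
      intro s hs0 hs1 hts0 hts1
      refine ⟨fun v' i' => ?_, fun v' => ?_, fun i' v' hv' => ?_⟩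
      · by_cases hA : v' = v ∧ i' = i
        · rw [hA.1, hA.2, hZvi]; exact ⟨hs0, hs1⟩
        · by_cases hB : v' = v ∧ i' = j
          · rw [hB.1, hB.2, hZvj]; exact ⟨hts0, hts1⟩
          · rw [hZother _ _ _ hA hB]; exact h2.1 v' i'
      · by_cases hv : v' = v
        · subst hv
          have hkey : ∀ i', Z s v' i' = Y v' i' +
              ((if i' = i then s - Y v' i else 0) + (if i' = j then (T - s) - Y v' j else 0)) := by
            intro i'
            by_cases hA : i' = i
            · subst hA
              rw [hZvi, if_pos rfl, if_neg (fun hcc : i' = j => hji hcc.symm)]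
              ring
            · by_cases hB : i' = j
              · subst hB
                rw [hZvj, if_neg hA, if_pos rfl]
                ring
              · rw [hZother _ _ _ (fun hcc => hA hcc.2) (fun hcc => hB hcc.2),
                  if_neg hA, if_neg hB]
                ring
          rw [Finset.sum_congr rfl fun i' _ => hkey i', Finset.sum_add_distrib,
            Finset.sum_add_distrib, Finset.sum_ite_eq' Finset.univ i,
            Finset.sum_ite_eq' Finset.univ j, h2.2.1 v']
          simp only [Finset.mem_univ, if_true]
          rw [hTdef]
          ring
        · rw [Finset.sum_congr rfl fun i' _ =>
            hZother s v' i' (fun hcc => hv hcc.1) (fun hcc => hv hcc.1)]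
          exact h2.2.1 v'
      · have hY1 := h2.2.2 i' v' hv'
        by_cases hA : v' = v ∧ i' = i
        · rw [hA.1, hA.2] at hY1; exact absurd hY1 hYvi.2
        · by_cases hB : v' = v ∧ i' = j
          · rw [hB.1, hB.2] at hY1; exact absurd hY1 hYvj.2
          · rw [hZother _ _ _ hA hB]; exact hY1
    -- affinity of each entry
    have haffZ : ∀ (v' : V) (i' : C), IsAff fun s => Z s v' i' := by
      intro v' i'
      by_cases hA : v' = v ∧ i' = i
      · exact ⟨0, 1, fun s => by show Z s v' i' = 0 + 1 * s; rw [hA.1, hA.2, hZvi]; ring⟩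
      · by_cases hB : v' = v ∧ i' = j
        · exact ⟨T, -1, fun s => by show Z s v' i' = T + -1 * s; rw [hB.1, hB.2, hZvj]; ring⟩
        · exact ⟨Y v' i', 0, fun s => by
            show Z s v' i' = Y v' i' + 0 * s; rw [hZother _ _ _ hA hB]; ring⟩
    -- affinity of the gain along the segment
    have haffF : IsAff fun s => cachingGain R lam w (Z s) := by
      unfold cachingGain
      refine isAff_sum R _ fun r hr => ?_
      refine isAff_mul_left _ (isAff_sum _ _ fun k hk => ?_)
      refine isAff_mul_left _ (isAff_one_sub ?_)
      have hfac : ∀ x : ℕ, IsAff fun s => 1 - Z s (r.2.getD x default) r.1 :=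
        fun x => isAff_one_sub (haffZ _ _)
      by_cases hex : ∃ k0 ∈ Finset.range (k + 1), r.2.getD k0 default = v
      · obtain ⟨k0, hk0, hk0v⟩ := hex
        refine isAff_prod_single _ _ k0 ?_ hfac
        intro k' hk' hne s
        have hklen : k < r.2.length - 1 := Finset.mem_range.mp hk
        have hk'lt : k' < r.2.length := by
          have := Finset.mem_range.mp hk'; omega
        have hk0lt : k0 < r.2.length := by
          have := Finset.mem_range.mp hk0; omega
        have hnode : r.2.getD k' default ≠ v := by
          intro hEq
          apply hne
          have h1 : r.2[k']'hk'lt = r.2[k0]'hk0lt := by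
            rw [← List.getD_eq_getElem _ default hk'lt, ← List.getD_eq_getElem _ default hk0lt,
              hEq, hk0v]
          exact ((hsimple r hr).getElem_inj_iff).mp h1
        rw [hZother _ _ _ (fun hcc => hnode hcc.1) (fun hcc => hnode hcc.1),
          hZother _ _ _ (fun hcc => hnode hcc.1) (fun hcc => hnode hcc.1)]
      · push_neg at hex
        refine isAff_prod_single _ _ (k + 1) ?_ hfac
        intro k' hk' _ s
        rw [hZother _ _ _ (fun hcc => hex k' hk' hcc.1) (fun hcc => hex k' hk' hcc.1),
          hZother _ _ _ (fun hcc => hex k' hk' hcc.1) (fun hcc => hex k' hk' hcc.1)]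
    -- endpoints
    set lo : ℝ := max 0 (T - 1) with hlodef
    set hi : ℝ := min 1 T with hhidef
    have hT0 : 0 < T := by rw [hTdef]; linarith
    have hT2 : T < 2 := by rw [hTdef]; linarith
    have hlo0 : 0 ≤ lo := le_max_left _ _
    have hlo1 : lo ≤ 1 := by rw [hlodef]; exact max_le zero_le_one (by linarith)
    have hloT0 : 0 ≤ T - lo := by
      rw [hlodef]
      have := max_le hT0.le (show T - 1 ≤ T by linarith)
      linarith
    have hloT1 : T - lo ≤ 1 := by
      rw [hlodef]
      have := le_max_right 0 (T - 1)
      linarith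
    have hhi0 : 0 ≤ hi := by rw [hhidef]; exact le_min zero_le_one hT0.le
    have hhi1 : hi ≤ 1 := min_le_left _ _
    have hhiT0 : 0 ≤ T - hi := by
      rw [hhidef]
      have := min_le_right 1 T
      linarith
    have hhiT1 : T - hi ≤ 1 := by
      rw [hhidef]
      have := le_min (show T - 1 ≤ 1 by linarith) (show T - 1 ≤ T by linarith)
      linarith
    have hxlo : lo ≤ Y v i := by
      rw [hlodef]
      exact max_le h0i.le (by rw [hTdef]; linarith)
    have hxhi : Y v i ≤ hi := by
      rw [hhidef]
      exact le_min h1i.le (by rw [hTdef]; linarith)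
    have hFmax : cachingGain R lam w Y
        ≤ max (cachingGain R lam w (Z lo)) (cachingGain R lam w (Z hi)) := by
      have h1 : cachingGain R lam w Y = cachingGain R lam w (Z (Y v i)) := by rw [hZY]
      rw [h1]
      exact isAff_le_max haffF hxlo hxhi
    -- cardinality decrease at endpoints
    have hdec : ∀ s, (s = 0 ∨ s = 1 ∨ T - s = 0 ∨ T - s = 1) → (frSet (Z s)).card ≤ n := by
      intro s hs
      obtain ⟨e, he_mem, he_int⟩ : ∃ e ∈ frSet Y, Z s e.1 e.2 = 0 ∨ Z s e.1 e.2 = 1 := by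
        rcases hs with h | h | h | h
        · exact ⟨(v, i), hvi, Or.inl ((hZvi s).trans h)⟩
        · exact ⟨(v, i), hvi, Or.inr ((hZvi s).trans h)⟩
        · exact ⟨(v, j), mem_frSet.mpr ⟨hYvj.1, hYvj.2⟩, Or.inl ((hZvj s).trans h)⟩
        · exact ⟨(v, j), mem_frSet.mpr ⟨hYvj.1, hYvj.2⟩, Or.inr ((hZvj s).trans h)⟩
      have hsub : frSet (Z s) ⊆ (frSet Y).erase e := by
        intro p hp
        have hp' := mem_frSet.mp hp
        refine Finset.mem_erase.mpr ⟨?_, ?_⟩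
        · rintro rfl
          rcases he_int with h | h
          · exact hp'.1 h
          · exact hp'.2 h
        · rw [mem_frSet]
          by_cases hpi : p = (v, i)
          · subst hpi; exact ⟨hYvi.1, hYvi.2⟩
          · by_cases hpj : p = (v, j)
            · subst hpj; exact ⟨hYvj.1, hYvj.2⟩
            · have hZp : Z s p.1 p.2 = Y p.1 p.2 :=
                hZother _ _ _ (fun hcc => hpi (Prod.ext hcc.1 hcc.2))
                  (fun hcc => hpj (Prod.ext hcc.1 hcc.2))
              rw [← hZp]; exact hp'
      have h1 : 1 ≤ (frSet Y).card := Finset.card_pos.mpr ⟨e, he_mem⟩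
      calc (frSet (Z s)).card ≤ ((frSet Y).erase e).card := Finset.card_le_card hsub
        _ = (frSet Y).card - 1 := Finset.card_erase_of_mem he_mem
        _ ≤ n := by omega
    rcases le_total (cachingGain R lam w (Z lo)) (cachingGain R lam w (Z hi)) with hcmp | hcmp
    · have hd : hi = 0 ∨ hi = 1 ∨ T - hi = 0 ∨ T - hi = 1 := by
        rcases le_total 1 T with h | h
        · exact Or.inr (Or.inl (by rw [hhidef]; exact min_eq_left h))
        · exact Or.inr (Or.inr (Or.inl (by rw [hhidef, min_eq_right h]; ring)))
      obtain ⟨X, hX, hle⟩ := ih (Z hi) (hZmem hi hhi0 hhi1 hhiT0 hhiT1) (hdec hi hd)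
      exact ⟨X, hX, le_trans (le_trans hFmax (le_of_eq (max_eq_right hcmp))) hle⟩
    · have hd : lo = 0 ∨ lo = 1 ∨ T - lo = 0 ∨ T - lo = 1 := by
        rcases le_total (T - 1) 0 with h | h
        · exact Or.inl (by rw [hlodef]; exact max_eq_left h)
        · exact Or.inr (Or.inr (Or.inr (by rw [hlodef, max_eq_right h]; ring)))
      obtain ⟨X, hX, hle⟩ := ih (Z lo) (hZmem lo hlo0 hlo1 hloT0 hloT1) (hdec lo hd)
      exact ⟨X, hX, le_trans (le_trans hFmax (le_of_eq (max_eq_left hcmp))) hle⟩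

end Round

set_option maxHeartbeats 1000000 in
/-- equivalence of MaxCG and its three probabilistic relaxations:
`max_{X∈D1} F(X) = max_{Y∈D2} F(Y) = sup_μ E_μ[F] (μ over D1) = sup_μ E_μ[F] (product-form μ over D1)`. -/
theorem stmt7 {V C : Type*} [Fintype V] [Fintype C] [Inhabited V]
    [DecidableEq V] [DecidableEq C]
    (R : Finset (C × List V)) (lam : C × List V → ℝ) (w : V → V → ℝ)
    (hpath : ∀ r ∈ R, r.2 ≠ []) (hlam : ∀ r ∈ R, 0 ≤ lam r) (hw : ∀ u v, 0 ≤ w u v)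
    (hsimple : ∀ r ∈ R, r.2.Nodup)
    (c : V → ℕ) (S : C → Finset V)
    (hS : ∀ v : V, (Finset.univ.filter (fun i : C => v ∈ S i)).card ≤ c v)
    (hcap : ∀ v : V, c v ≤ Fintype.card C) :
    sSup {z : ℝ | ∃ X : V → C → Bool, memD1 c S X ∧
        cachingGain R lam w (fun v i => if X v i then 1 else 0) = z}
      = sSup {z : ℝ | ∃ Y : V → C → ℝ, memD2 c S Y ∧ cachingGain R lam w Y = z} ∧
    sSup {z : ℝ | ∃ Y : V → C → ℝ, memD2 c S Y ∧ cachingGain R lam w Y = z}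
      = sSup {z : ℝ | ∃ μ : (V → C → Bool) → ℝ,
          (∀ X, 0 ≤ μ X) ∧ (∑ X, μ X = 1) ∧ (∀ X, μ X ≠ 0 → memD1 c S X) ∧
          (∑ X, μ X * cachingGain R lam w (fun v i => if X v i then 1 else 0)) = z} ∧
    sSup {z : ℝ | ∃ μ : (V → C → Bool) → ℝ,
          (∀ X, 0 ≤ μ X) ∧ (∑ X, μ X = 1) ∧ (∀ X, μ X ≠ 0 → memD1 c S X) ∧
          (∑ X, μ X * cachingGain R lam w (fun v i => if X v i then 1 else 0)) = z}
      = sSup {z : ℝ | ∃ ν : V → (C → Bool) → ℝ,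
          (∀ v x, 0 ≤ ν v x) ∧ (∀ v, ∑ x, ν v x = 1) ∧
          (∀ X : V → C → Bool, (∏ v, ν v (X v)) ≠ 0 → memD1 c S X) ∧
          (∑ X : V → C → Bool,
            (∏ v, ν v (X v)) * cachingGain R lam w (fun v i => if X v i then 1 else 0)) = z} := by
  
  classical
  obtain ⟨X0, hX0⟩ := exists_feasible c S hS hcap
  set G : (V → C → Bool) → ℝ := fun X => cachingGain R lam w (fun v i => if X v i then 1 else 0)
    with hGdef
  obtain ⟨Xm, hXm_mem, hXm_max⟩ := Finset.exists_max_image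
    (Finset.univ.filter fun X : V → C → Bool => memD1 c S X) G
    ⟨X0, Finset.mem_filter.mpr ⟨Finset.mem_univ _, hX0⟩⟩
  have hXm : memD1 c S Xm := (Finset.mem_filter.mp hXm_mem).2
  have hmaxD1 : ∀ X : V → C → Bool, memD1 c S X → G X ≤ G Xm := fun X hX =>
    hXm_max X (Finset.mem_filter.mpr ⟨Finset.mem_univ _, hX⟩)
  set M : ℝ := G Xm with hMdef
  have hkey : ∀ Y : V → C → ℝ, memD2 c S Y → cachingGain R lam w Y ≤ M := by
    intro Y hY
    obtain ⟨X, hX1, hX2⟩ := round_lemma R lam w hsimple c S (frSet Y).card Y hY le_rfl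
    exact le_trans hX2 (hmaxD1 X hX1)
  -- set 1
  have hs1 : sSup {z : ℝ | ∃ X : V → C → Bool, memD1 c S X ∧
      cachingGain R lam w (fun v i => if X v i then 1 else 0) = z} = M := by
    have hmem : M ∈ {z : ℝ | ∃ X : V → C → Bool, memD1 c S X ∧
        cachingGain R lam w (fun v i => if X v i then 1 else 0) = z} := ⟨Xm, hXm, rfl⟩
    have hub : ∀ z ∈ {z : ℝ | ∃ X : V → C → Bool, memD1 c S X ∧
        cachingGain R lam w (fun v i => if X v i then 1 else 0) = z}, z ≤ M := by
      rintro z ⟨X, hX, rfl⟩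
      exact hmaxD1 X hX
    exact le_antisymm (csSup_le ⟨M, hmem⟩ hub) (le_csSup ⟨M, hub⟩ hmem)
  -- set 2
  have hs2 : sSup {z : ℝ | ∃ Y : V → C → ℝ, memD2 c S Y ∧ cachingGain R lam w Y = z} = M := by
    have hmem : M ∈ {z : ℝ | ∃ Y : V → C → ℝ, memD2 c S Y ∧ cachingGain R lam w Y = z} :=
      ⟨fun v i => if Xm v i then 1 else 0, memD2_embed c S hXm, rfl⟩
    have hub : ∀ z ∈ {z : ℝ | ∃ Y : V → C → ℝ, memD2 c S Y ∧ cachingGain R lam w Y = z},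
        z ≤ M := by
      rintro z ⟨Y, hY, rfl⟩
      exact hkey Y hY
    exact le_antisymm (csSup_le ⟨M, hmem⟩ hub) (le_csSup ⟨M, hub⟩ hmem)
  -- set 3
  have hub3 : ∀ (μ : (V → C → Bool) → ℝ), (∀ X, 0 ≤ μ X) → (∑ X, μ X = 1) →
      (∀ X, μ X ≠ 0 → memD1 c S X) → (∑ X, μ X * G X) ≤ M := by
    intro μ hpos hsum hsupp
    calc ∑ X, μ X * G X ≤ ∑ X : V → C → Bool, μ X * M := by
          refine Finset.sum_le_sum fun X _ => ?_
          rcases eq_or_ne (μ X) 0 with h | h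
          · simp [h]
          · exact mul_le_mul_of_nonneg_left (hmaxD1 X (hsupp X h)) (hpos X)
      _ = M := by rw [← Finset.sum_mul, hsum, one_mul]
  have hs3 : sSup {z : ℝ | ∃ μ : (V → C → Bool) → ℝ,
      (∀ X, 0 ≤ μ X) ∧ (∑ X, μ X = 1) ∧ (∀ X, μ X ≠ 0 → memD1 c S X) ∧
      (∑ X, μ X * cachingGain R lam w (fun v i => if X v i then 1 else 0)) = z} = M := by
    have hval : (∑ X : V → C → Bool, (if X = Xm then (1 : ℝ) else 0) *
        cachingGain R lam w (fun v i => if X v i then 1 else 0)) = M := by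
      rw [hMdef, hGdef]
      simp [ite_mul, Finset.sum_ite_eq' Finset.univ Xm]
    have hsupp : ∀ X : V → C → Bool, (if X = Xm then (1 : ℝ) else 0) ≠ 0 → memD1 c S X := by
      intro X hX
      by_cases h : X = Xm
      · exact h ▸ hXm
      · exact absurd (if_neg h) hX
    have hmem : M ∈ {z : ℝ | ∃ μ : (V → C → Bool) → ℝ,
        (∀ X, 0 ≤ μ X) ∧ (∑ X, μ X = 1) ∧ (∀ X, μ X ≠ 0 → memD1 c S X) ∧
        (∑ X, μ X * cachingGain R lam w (fun v i => if X v i then 1 else 0)) = z} :=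
      ⟨fun X => if X = Xm then 1 else 0, fun X => by positivity, by simp, hsupp, hval⟩
    have hub : ∀ z ∈ {z : ℝ | ∃ μ : (V → C → Bool) → ℝ,
        (∀ X, 0 ≤ μ X) ∧ (∑ X, μ X = 1) ∧ (∀ X, μ X ≠ 0 → memD1 c S X) ∧
        (∑ X, μ X * cachingGain R lam w (fun v i => if X v i then 1 else 0)) = z}, z ≤ M := by
      rintro z ⟨μ, hpos, hsum, hsupp, rfl⟩
      exact hub3 μ hpos hsum hsupp
    exact le_antisymm (csSup_le ⟨M, hmem⟩ hub) (le_csSup ⟨M, hub⟩ hmem)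
  -- set 4
  have hs4 : sSup {z : ℝ | ∃ ν : V → (C → Bool) → ℝ,
      (∀ v x, 0 ≤ ν v x) ∧ (∀ v, ∑ x, ν v x = 1) ∧
      (∀ X : V → C → Bool, (∏ v, ν v (X v)) ≠ 0 → memD1 c S X) ∧
      (∑ X : V → C → Bool,
        (∏ v, ν v (X v)) * cachingGain R lam w (fun v i => if X v i then 1 else 0)) = z} = M := by
    have hprod : ∀ X : V → C → Bool,
        (∏ v, if X v = Xm v then (1 : ℝ) else 0) = if X = Xm then 1 else 0 := by
      intro X
      by_cases h : X = Xm
      · subst h; simp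
      · rw [if_neg h]
        obtain ⟨v, hv⟩ := Function.ne_iff.mp h
        exact Finset.prod_eq_zero (Finset.mem_univ v) (if_neg hv)
    have hval : (∑ X : V → C → Bool, (∏ v, if X v = Xm v then (1 : ℝ) else 0) *
        cachingGain R lam w (fun v i => if X v i then 1 else 0)) = M := by
      rw [Finset.sum_congr rfl fun X _ => by rw [hprod X]]
      rw [hMdef, hGdef]
      simp [ite_mul, Finset.sum_ite_eq' Finset.univ Xm]
    have hsupp : ∀ X : V → C → Bool, (∏ v, if X v = Xm v then (1 : ℝ) else 0) ≠ 0 →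
        memD1 c S X := by
      intro X hX
      rw [hprod] at hX
      by_cases h : X = Xm
      · exact h ▸ hXm
      · exact absurd (if_neg h) hX
    have hmem : M ∈ {z : ℝ | ∃ ν : V → (C → Bool) → ℝ,
        (∀ v x, 0 ≤ ν v x) ∧ (∀ v, ∑ x, ν v x = 1) ∧
        (∀ X : V → C → Bool, (∏ v, ν v (X v)) ≠ 0 → memD1 c S X) ∧
        (∑ X : V → C → Bool,
          (∏ v, ν v (X v)) * cachingGain R lam w (fun v i => if X v i then 1 else 0)) = z} :=
      ⟨fun v x => if x = Xm v then 1 else 0, fun v x => by positivity, fun v => by simp,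
        hsupp, hval⟩
    have hub4 : ∀ (ν : V → (C → Bool) → ℝ), (∀ v x, 0 ≤ ν v x) → (∀ v, ∑ x, ν v x = 1) →
        (∀ X : V → C → Bool, (∏ v, ν v (X v)) ≠ 0 → memD1 c S X) →
        (∑ X : V → C → Bool, (∏ v, ν v (X v)) * G X) ≤ M := by
      intro ν hpos hsum hsupp
      have hps : ∑ X : V → C → Bool, ∏ v, ν v (X v) = 1 := by
        have h := Finset.prod_univ_sum (fun _ : V => (Finset.univ : Finset (C → Bool)))
          (fun v x => ν v x)
        rw [Fintype.piFinset_univ] at h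
        rw [← h]
        exact Finset.prod_eq_one fun v _ => hsum v
      exact hub3 (fun X => ∏ v, ν v (X v))
        (fun X => Finset.prod_nonneg fun v _ => hpos v (X v)) hps hsupp
    have hub : ∀ z ∈ {z : ℝ | ∃ ν : V → (C → Bool) → ℝ,
        (∀ v x, 0 ≤ ν v x) ∧ (∀ v, ∑ x, ν v x = 1) ∧
        (∀ X : V → C → Bool, (∏ v, ν v (X v)) ≠ 0 → memD1 c S X) ∧
        (∑ X : V → C → Bool,
          (∏ v, ν v (X v)) * cachingGain R lam w (fun v i => if X v i then 1 else 0)) = z},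
        z ≤ M := by
      rintro z ⟨ν, hpos, hsum, hsupp, rfl⟩
      exact hub4 ν hpos hsum hsupp
    exact le_antisymm (csSup_le ⟨M, hmem⟩ hub) (le_csSup ⟨M, hub⟩ hmem)
  exact ⟨hs1.trans hs2.symm, hs2.trans hs3.symm, hs3.trans hs4.symm⟩
end

section
/- Assume every request path in R is simple. For Y ∈ ℝ^{V×C}, define G(Y) ∈ ℝ^{V×C} by G(Y)_{ui} = ∑_{(i,p)∈R : u appears in p} λ_{(i,p)} ∑_{k'=k_p(u)}^{|p|−1} w(p_{k'+1}, p_{k'})·𝟙{∑_{ℓ=1}^{k'} y_{p_ℓ i} ≤ 1}, where k_p(u) is the (unique) position of u in p. Then G(Y) is a supergradient of the concave function L at Y: for all Y' ∈ ℝ^{V×C}, L(Y') ≤ L(Y) + ∑_{u∈V, i∈C} G(Y)_{ui}·(y'_{ui} − y_{ui}). -/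
open Finset

/-! `t ↦ min 1 t` is concave with supergradient `𝟙{t ≤ 1}` at `t`, and `L` is a nonnegative
combination of `min 1` applied to the prefix sums `y_{p_1 i} + ⋯ + y_{p_k i}`. Adding up the
pointwise supergradient inequalities and exchanging the triangular double sum over `l ≤ k`
collects, for each position `l` of a path, the weight `∑_{k ≥ l} w_k 𝟙{⋯}`. Since paths are
simple, positions in `p` correspond to nodes of `p`, giving the entries of `G(Y)`. -/

theorem min_one_add_le {α : Type*} [Semiring α] [LinearOrder α] (s d : α) :
    min 1 (s + d) ≤ min 1 s + (if s ≤ 1 then 1 else 0) * d := by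
  split_ifs with h
  · rw [min_eq_right h, one_mul]
    exact min_le_right _ _
  · rw [zero_mul, add_zero, min_eq_left (le_of_not_ge h)]
    exact min_le_left _ _

theorem sum_range_mul_sum_range_succ_eq_sum_Ico {M : Type*} [NonUnitalNonAssocSemiring M]
    {n m : ℕ} (hnm : n ≤ m) (a g : ℕ → M) :
    ∑ k ∈ range n, a k * ∑ l ∈ range (k + 1), g l =
      ∑ l ∈ range m, (∑ k ∈ Ico l n, a k) * g l := by
  have swap : ∑ k ∈ range n, a k * ∑ l ∈ range (k + 1), g l =
      ∑ l ∈ range n, (∑ k ∈ Ico l n, a k) * g l := by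
    simp only [range_eq_Ico, mul_sum, sum_mul]
    rw [sum_Ico_Ico_comm]
  have tail_eq_zero : ∑ l ∈ Ico n m, (∑ k ∈ Ico l n, a k) * g l = 0 :=
    sum_eq_zero fun l hl => by rw [Ico_eq_empty_of_le (mem_Ico.mp hl).1, sum_empty, zero_mul]
  rw [swap, ← sum_range_add_sum_Ico _ hnm, tail_eq_zero, add_zero]

theorem sum_mul_min_one_sum_range_le {α : Type*} [Ring α] [LinearOrder α] [IsOrderedRing α]
    {n m : ℕ} (hnm : n ≤ m) (a : ℕ → α) (ha : ∀ k < n, 0 ≤ a k) (x x' : ℕ → α) :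
    ∑ k ∈ range n, a k * min 1 (∑ l ∈ range (k + 1), x' l) ≤
      ∑ k ∈ range n, a k * min 1 (∑ l ∈ range (k + 1), x l) +
        ∑ l ∈ range m, (∑ k ∈ Ico l n,
          a k * (if ∑ j ∈ range (k + 1), x j ≤ 1 then 1 else 0)) * (x' l - x l) := by
  rw [← sum_range_mul_sum_range_succ_eq_sum_Ico hnm, ← sum_add_distrib]
  refine sum_le_sum fun k hk => ?_
  have hx' : ∑ l ∈ range (k + 1), x' l =
      ∑ l ∈ range (k + 1), x l + ∑ l ∈ range (k + 1), (x' l - x l) := by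
    rw [← sum_add_distrib]
    exact sum_congr rfl fun _ _ => by abel
  rw [hx', mul_assoc, ← mul_add]
  exact mul_le_mul_of_nonneg_left (min_one_add_le _ _) (ha k (mem_range.mp hk))

theorem List.Nodup.sum_toFinset_idxOf {α M : Type*} [DecidableEq α] [AddCommMonoid M]
    {p : List α} (hp : p.Nodup) (d : α) (f : α → ℕ → M) :
    ∑ u ∈ p.toFinset, f u (p.idxOf u) = ∑ l ∈ Finset.range p.length, f (p.getD l d) l := by
  have getD_idxOf {u : α} (hu : u ∈ p.toFinset) : p.getD (p.idxOf u) d = u := by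
    rw [List.getD_eq_getElem _ _ (List.idxOf_lt_length_iff.mpr (List.mem_toFinset.mp hu)),
      List.getElem_idxOf]
  refine sum_nbij' (fun u => p.idxOf u) (fun l => p.getD l d) ?_ ?_ ?_ ?_ ?_
  · intro u hu
    exact Finset.mem_range.mpr (List.idxOf_lt_length_iff.mpr (List.mem_toFinset.mp hu))
  · intro l hl
    rw [List.getD_eq_getElem _ _ (Finset.mem_range.mp hl)]
    exact List.mem_toFinset.mpr (List.getElem_mem _)
  · exact fun _ => getD_idxOf
  · intro l hl
    rw [List.getD_eq_getElem _ _ (Finset.mem_range.mp hl)]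
    exact hp.idxOf_getElem l _
  · intro u hu
    rw [getD_idxOf hu]

theorem sum_sum_sum_ite_mem_mul {V C M : Type*} [Fintype V] [Fintype C] [DecidableEq V]
    [DecidableEq C] [NonUnitalNonAssocSemiring M] (R : Finset (C × List V))
    (g : C × List V → V → M) (Δ : V → C → M) :
    ∑ u : V, ∑ i : C, (∑ r ∈ R, if r.1 = i ∧ u ∈ r.2 then g r u else 0) * Δ u i =
      ∑ r ∈ R, ∑ u ∈ r.2.toFinset, g r u * Δ u r.1 := by
  have sum_item (r : C × List V) (u : V) :
      ∑ i : C, (if r.1 = i ∧ u ∈ r.2 then g r u * Δ u i else 0) =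
        if u ∈ r.2.toFinset then g r u * Δ u r.1 else 0 := by
    simp only [ite_and, sum_ite_eq, mem_univ, if_true, List.mem_toFinset]
  simp only [sum_mul, ite_mul, zero_mul]
  rw [sum_congr rfl fun u _ => sum_comm, sum_comm]
  refine sum_congr rfl fun r _ => ?_
  simp only [sum_item, sum_ite_mem, univ_inter]

noncomputable def pathSupergrad {V C : Type*} [Inhabited V] (w : V → V → ℝ) (Y : V → C → ℝ)
    (i : C) (p : List V) (l : ℕ) : ℝ :=
  ∑ k ∈ Ico l (p.length - 1), w (p.getD (k + 1) default) (p.getD k default) *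
    if ∑ j ∈ range (k + 1), Y (p.getD j default) i ≤ 1 then 1 else 0

theorem stmt8_general {V C : Type*} [Fintype V] [Fintype C] [Inhabited V]
    [DecidableEq V] [DecidableEq C]
    (R : Finset (C × List V)) (lam : C × List V → ℝ) (w : V → V → ℝ)
    (hlam : ∀ r ∈ R, 0 ≤ lam r) (hw : ∀ u v, 0 ≤ w u v)
    (hsimple : ∀ r ∈ R, r.2.Nodup)
    (Y : V → C → ℝ) :
    ∀ Y' : V → C → ℝ,
      relaxedGain R lam w Y' ≤ relaxedGain R lam w Y +
        ∑ u : V, ∑ i : C,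
          (∑ r ∈ R, if r.1 = i ∧ u ∈ r.2 then
              lam r * ∑ k' ∈ Finset.Ico (r.2.idxOf u) (r.2.length - 1),
                w (r.2.getD (k' + 1) default) (r.2.getD k' default) *
                  (if (∑ l ∈ Finset.range (k' + 1), Y (r.2.getD l default) r.1) ≤ 1
                    then 1 else 0)
            else 0) * (Y' u i - Y u i) := by
  intro Y'
  change _ ≤ _ + ∑ u : V, ∑ i : C, (∑ r ∈ R, if r.1 = i ∧ u ∈ r.2 then
    lam r * pathSupergrad w Y r.1 r.2 (r.2.idxOf u) else 0) * (Y' u i - Y u i)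
  rw [sum_sum_sum_ite_mem_mul, relaxedGain, relaxedGain, ← sum_add_distrib]
  refine sum_le_sum fun r hr => ?_
  rw [(hsimple r hr).sum_toFinset_idxOf default
    (fun u l => lam r * pathSupergrad w Y r.1 r.2 l * (Y' u r.1 - Y u r.1))]
  simp only [mul_assoc (lam r), ← mul_sum, ← mul_add]
  exact mul_le_mul_of_nonneg_left
    (sum_mul_min_one_sum_range_le (Nat.sub_le _ 1) _ (fun _ _ => hw _ _) _ _) (hlam r hr)

/-- the matrix `G(Y)` with
`G(Y)_{ui} = ∑_{(i,p)∈R : u∈p} λ_{(i,p)} ∑_{k'=k_p(u)}^{|p|−1} w(p_{k'+1},p_{k'})·𝟙{∑_{ℓ=1}^{k'} y_{p_ℓ i} ≤ 1}`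
is a supergradient of the concave function `L` at `Y` (paths are simple, so `k_p(u)` is
the unique position of `u` in `p`; 0-based here via `List.indexOf`). -/
theorem stmt8 {V C : Type*} [Fintype V] [Fintype C] [Inhabited V]
    [DecidableEq V] [DecidableEq C]
    (R : Finset (C × List V)) (lam : C × List V → ℝ) (w : V → V → ℝ)
    (hpath : ∀ r ∈ R, r.2 ≠ []) (hlam : ∀ r ∈ R, 0 ≤ lam r) (hw : ∀ u v, 0 ≤ w u v)
    (hsimple : ∀ r ∈ R, r.2.Nodup)
    (Y : V → C → ℝ) :
    ∀ Y' : V → C → ℝ,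
      relaxedGain R lam w Y' ≤ relaxedGain R lam w Y +
        ∑ u : V, ∑ i : C,
          (∑ r ∈ R, if r.1 = i ∧ u ∈ r.2 then
              lam r * ∑ k' ∈ Finset.Ico (r.2.idxOf u) (r.2.length - 1),
                w (r.2.getD (k' + 1) default) (r.2.getD k' default) *
                  (if (∑ l ∈ Finset.range (k' + 1), Y (r.2.getD l default) r.1) ≤ 1
                    then 1 else 0)
            else 0) * (Y' u i - Y u i) :=
  stmt8_general R lam w hlam hw hsimple Y
end

section
/- Let M ≥ 1 be a real number and set α = M^{−1/2}. Define the caching gain of the star-network example as f(x_1,x_2) = (1−α)·x_1 + α·M·x_2 for (x_1,x_2) ∈ {0,1}² with x_1 + x_2 = 1 (the single cache slot stores exactly one of the two items). Then the steady-state expected gain of path replication with LRU/LFU/FIFO, which equals (1−α)·f(1,0) + α·f(0,1) = (1−α)² + α²M, satisfies (1−α)² + α²M ≤ (2/√M) · max{f(1,0), f(0,1)}; in particular the ratio of the steady-state expected caching gain to the optimal caching gain is at most 2·M^{−1/2}. -/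
lemma Real.one_div_sqrt_mul_self (M : ℝ) : 1 / √M * M = √M := by
  rw [one_div_mul_eq_div, Real.div_sqrt]

lemma Real.one_div_sqrt_sq_mul_self {M : ℝ} (hM : 0 < M) : (1 / √M) ^ 2 * M = 1 := by
  rw [div_pow, Real.sq_sqrt hM.le]
  field_simp

/-- on the star-network example with `α = M^{−1/2}` and caching gain
`f(x₁,x₂) = (1−α)x₁ + αM x₂` on the two feasible allocations `(1,0)` and `(0,1)`,
the steady-state expected gain `(1−α)·f(1,0) + α·f(0,1) = (1−α)² + α²M` of path
replication with LRU/LFU/FIFO is at most `(2/√M)·max{f(1,0), f(0,1)}`. -/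
theorem stmt10 (M : ℝ) (hM : 1 ≤ M) :
    let α : ℝ := 1 / Real.sqrt M
    let f : ℝ → ℝ → ℝ := fun x1 x2 => (1 - α) * x1 + α * M * x2
    ((1 - α) * f 1 0 + α * f 0 1 = (1 - α) ^ 2 + α ^ 2 * M) ∧
    (1 - α) * f 1 0 + α * f 0 1 ≤ (2 / Real.sqrt M) * max (f 1 0) (f 0 1) := by
  intro α f
  have hsqrt : 1 ≤ √M := Real.one_le_sqrt.mpr hM
  have hα_nonneg : 0 ≤ α := by positivity
  have hα_le_one : α ≤ 1 := (div_le_one (by positivity)).mpr hsqrt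
  have hf10 : f 1 0 = 1 - α := by simp [f]
  have hf01 : f 0 1 = √M := by
    simpa [f, α] using Real.one_div_sqrt_mul_self M
  have hmax : max (f 1 0) (f 0 1) = √M := by
    rw [hf10, hf01]
    exact max_eq_right (by linarith)
  have hgain : (1 - α) * f 1 0 + α * f 0 1 = (1 - α) ^ 2 + α ^ 2 * M := by
    rw [hf10, hf01, ← Real.one_div_sqrt_mul_self M]
    ring
  refine ⟨hgain, ?_⟩
  -- `α² M = 1`, so the gain is `(1 - α)² + 1 ≤ 2`, while the right-hand side is `(2 / √M) · √M = 2`.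
  rw [hgain, hmax, Real.one_div_sqrt_sq_mul_self (by linarith),
    div_mul_cancel₀ _ (by positivity : √M ≠ 0)]
  nlinarith
end

section
/- Assume every request path in R is simple. Fix v ∈ V and i, i' ∈ C with i ≠ i', and let E_{vi}, E_{vi'} ∈ ℝ^{V×C} denote the corresponding standard basis matrices. Then for every Y ∈ ℝ^{V×C}, the function s ↦ F(Y + s·(E_{vi} − E_{vi'})) is an affine function of s ∈ ℝ. -/
open Finset

/-!
Along the line `Y + s·D`, with `D` supported on the row of a single node `v`, every entry
`y_{u j}` with `u ≠ v` is constant in `s` and every entry is affine in `s`. On a simple path the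
node `v` occurs at most once, so each product `∏_{k'} (1 − y_{p_{k'} i})` has at most one
non-constant factor and is therefore affine, and so is `F`, a linear combination of them.
-/

def IsAffineFun (f : ℝ → ℝ) : Prop := ∃ a b : ℝ, ∀ s, f s = a * s + b

namespace IsAffineFun

lemma const (c : ℝ) : IsAffineFun fun _ => c := ⟨0, c, fun _ => by ring⟩

lemma const_mul (c : ℝ) {f : ℝ → ℝ} (hf : IsAffineFun f) : IsAffineFun fun s => c * f s := by
  obtain ⟨a, b, h⟩ := hf
  exact ⟨c * a, c * b, fun s => by dsimp only; rw [h]; ring⟩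

lemma mul_const {f : ℝ → ℝ} (hf : IsAffineFun f) (c : ℝ) : IsAffineFun fun s => f s * c := by
  simpa only [mul_comm _ c] using hf.const_mul c

lemma const_sub (c : ℝ) {f : ℝ → ℝ} (hf : IsAffineFun f) : IsAffineFun fun s => c - f s := by
  obtain ⟨a, b, h⟩ := hf
  exact ⟨-a, c - b, fun s => by dsimp only; rw [h]; ring⟩

lemma add {f g : ℝ → ℝ} (hf : IsAffineFun f) (hg : IsAffineFun g) :
    IsAffineFun fun s => f s + g s := by
  obtain ⟨a, b, hf⟩ := hf
  obtain ⟨a', b', hg⟩ := hg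
  exact ⟨a + a', b + b', fun s => by dsimp only; rw [hf, hg]; ring⟩

lemma sum {ι : Type*} {T : Finset ι} {f : ι → ℝ → ℝ} (hf : ∀ r ∈ T, IsAffineFun (f r)) :
    IsAffineFun fun s => ∑ r ∈ T, f r s := by
  simp only [← Finset.sum_apply]
  exact Finset.sum_induction f IsAffineFun (fun _ _ => add) (const 0) hf

lemma prod_of_const_of_ne {ι : Type*} [DecidableEq ι] {T : Finset ι} {f : ι → ℝ → ℝ} {k₀ : ι}
    (hf : IsAffineFun (f k₀)) (hconst : ∀ k ∈ T, k ≠ k₀ → ∀ s, f k s = f k 0) :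
    IsAffineFun fun s => ∏ k ∈ T, f k s := by
  have hrest : ∀ s, ∏ k ∈ T.erase k₀, f k s = ∏ k ∈ T.erase k₀, f k 0 := fun s =>
    prod_congr rfl fun k hk => hconst k (mem_of_mem_erase hk) (ne_of_mem_erase hk) s
  by_cases hk₀ : k₀ ∈ T
  · simp only [← Finset.mul_prod_erase T _ hk₀, hrest]
    exact hf.mul_const _
  · rw [Finset.erase_eq_of_notMem hk₀] at hrest
    rw [funext hrest]
    exact const _

end IsAffineFun

lemma List.Nodup.getD_ne_of_ne_idxOf {α : Type*} [BEq α] [LawfulBEq α] {p : List α}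
    (hp : p.Nodup) {k : ℕ} (hk : k < p.length) {v : α} (hne : k ≠ p.idxOf v) (d : α) :
    p.getD k d ≠ v := by
  rintro rfl
  rw [List.getD_eq_getElem _ _ hk, hp.idxOf_getElem] at hne
  exact hne rfl

theorem isAffineFun_cachingGain_add_mul {V C : Type*} [Fintype V] [Fintype C] [Inhabited V]
    [DecidableEq V] (R : Finset (C × List V)) (lam : C × List V → ℝ) (w : V → V → ℝ)
    (hsimple : ∀ r ∈ R, r.2.Nodup) (Y D : V → C → ℝ) (v : V) (hD : ∀ u ≠ v, ∀ j, D u j = 0) :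
    IsAffineFun fun s => cachingGain R lam w (fun u j => Y u j + s * D u j) := by
  unfold cachingGain
  refine .sum fun r hr => .const_mul _ <| .sum fun k hk => .const_mul _ <| .const_sub 1 ?_
  refine IsAffineFun.prod_of_const_of_ne (k₀ := r.2.idxOf v) ?_ fun k' hk' hne s => ?_
  · exact ⟨-D (r.2.getD _ default) r.1, 1 - Y (r.2.getD _ default) r.1, fun s => by ring⟩
  · have hlen : k' < r.2.length := by
      rw [Finset.mem_range] at hk hk'
      omega
    simp only [hD _ ((hsimple r hr).getD_ne_of_ne_idxOf hlen hne default), mul_zero]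

theorem stmt13_general {V C : Type*} [Fintype V] [Fintype C] [Inhabited V]
    [DecidableEq V] [DecidableEq C]
    (R : Finset (C × List V)) (lam : C × List V → ℝ) (w : V → V → ℝ)
    (hsimple : ∀ r ∈ R, r.2.Nodup)
    (v : V) (i i' : C) (Y : V → C → ℝ) :
    ∃ a b : ℝ, ∀ s : ℝ,
      cachingGain R lam w (fun u j => Y u j +
          s * ((if u = v ∧ j = i then 1 else 0) - (if u = v ∧ j = i' then 1 else 0)))
        = a * s + b :=
  isAffineFun_cachingGain_add_mul R lam w hsimple Y _ v fun u hu j => by simp [hu]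

/-- ε-convexity: if all request paths are simple then, for any node `v`
and distinct items `i ≠ i'`, the function `s ↦ F(Y + s·(E_{vi} − E_{vi'}))` is affine. -/
theorem stmt13 {V C : Type*} [Fintype V] [Fintype C] [Inhabited V]
    [DecidableEq V] [DecidableEq C]
    (R : Finset (C × List V)) (lam : C × List V → ℝ) (w : V → V → ℝ)
    (hpath : ∀ r ∈ R, r.2 ≠ []) (hlam : ∀ r ∈ R, 0 ≤ lam r) (hw : ∀ u v, 0 ≤ w u v)
    (hsimple : ∀ r ∈ R, r.2.Nodup)
    (v : V) (i i' : C) (hii : i ≠ i') (Y : V → C → ℝ) :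
    ∃ a b : ℝ, ∀ s : ℝ,
      cachingGain R lam w (fun u j => Y u j +
          s * ((if u = v ∧ j = i then 1 else 0) - (if u = v ∧ j = i' then 1 else 0)))
        = a * s + b :=
  stmt13_general R lam w hsimple v i i' Y
end

section
/- Assume every request path in R is simple. Let Y ∈ D2 and suppose there exist v ∈ V and i ≠ i' in C with 0 < y_{vi} < 1 and 0 < y_{vi'} < 1. Then there exists Y' ∈ D2 such that: Y' agrees with Y on every coordinate other than (v,i) and (v,i'); y'_{vi} + y'_{vi'} = y_{vi} + y_{vi'}; at least one of y'_{vi}, y'_{vi'} lies in {0,1}; and F(Y') ≥ F(Y). -/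
open Finset

lemma prod_affine_one (s : Finset ℕ) (a d : ℕ → ℝ) (k₀ : ℕ)
    (h : ∀ k ∈ s, k ≠ k₀ → d k = 0) (t : ℝ) :
    ∏ k ∈ s, (a k - t * d k) = (1 - t) * ∏ k ∈ s, a k + t * ∏ k ∈ s, (a k - d k) := by
  by_cases hk : k₀ ∈ s
  · rw [← Finset.prod_erase_mul s _ hk, ← Finset.prod_erase_mul s a hk,
        ← Finset.prod_erase_mul s (fun k => a k - d k) hk]
    have h1 : ∏ k ∈ s.erase k₀, (a k - t * d k) = ∏ k ∈ s.erase k₀, a k :=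
      Finset.prod_congr rfl fun k hk' => by
        rw [h k (Finset.mem_of_mem_erase hk') (Finset.ne_of_mem_erase hk')]; ring
    have h2 : ∏ k ∈ s.erase k₀, (a k - d k) = ∏ k ∈ s.erase k₀, a k :=
      Finset.prod_congr rfl fun k hk' => by
        rw [h k (Finset.mem_of_mem_erase hk') (Finset.ne_of_mem_erase hk')]; ring
    rw [h1, h2]; ring
  · have h1 : ∏ k ∈ s, (a k - t * d k) = ∏ k ∈ s, a k :=
      Finset.prod_congr rfl fun k hk' => by
        rw [h k hk' (fun he => hk (he ▸ hk'))]; ring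
    have h2 : ∏ k ∈ s, (a k - d k) = ∏ k ∈ s, a k :=
      Finset.prod_congr rfl fun k hk' => by
        rw [h k hk' (fun he => hk (he ▸ hk'))]; ring
    rw [h1, h2]; ring

lemma gain_affine {V C : Type*} [Fintype V] [Fintype C] [Inhabited V]
    (R : Finset (C × List V)) (lam : C × List V → ℝ) (w : V → V → ℝ)
    (hsimple : ∀ r ∈ R, r.2.Nodup)
    (Y D : V → C → ℝ) (hD : ∀ (j : C) (u u' : V), D u j ≠ 0 → D u' j ≠ 0 → u = u')
    (t : ℝ) :
    cachingGain R lam w (fun u j => Y u j + t * D u j)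
      = (1 - t) * cachingGain R lam w Y
        + t * cachingGain R lam w (fun u j => Y u j + D u j) := by
  simp only [cachingGain]
  rw [Finset.mul_sum, Finset.mul_sum, ← Finset.sum_add_distrib]
  refine Finset.sum_congr rfl fun r hr => ?_
  rw [mul_left_comm (1-t), mul_left_comm t, ← mul_add]
  congr 1
  rw [Finset.mul_sum, Finset.mul_sum, ← Finset.sum_add_distrib]
  refine Finset.sum_congr rfl fun k hk => ?_
  rw [mul_left_comm (1-t), mul_left_comm t, ← mul_add]
  congr 1
  -- now the product identity
  have hlen : ∀ k' ∈ Finset.range (k + 1), k' < r.2.length := by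
    intro k' hk'
    have hk1 : k < r.2.length - 1 := Finset.mem_range.mp hk
    have : k' ≤ k := Nat.lt_succ_iff.mp (Finset.mem_range.mp hk')
    omega
  have key : ∏ k' ∈ Finset.range (k+1), (1 - (Y (r.2.getD k' default) r.1 + t * D (r.2.getD k' default) r.1))
      = (1 - t) * ∏ k' ∈ Finset.range (k+1), (1 - Y (r.2.getD k' default) r.1)
        + t * ∏ k' ∈ Finset.range (k+1), (1 - (Y (r.2.getD k' default) r.1 + D (r.2.getD k' default) r.1)) := by
    simp only [show ∀ u : V, 1 - (Y u r.1 + t * D u r.1)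
        = (1 - Y u r.1) - t * D u r.1 from fun u => by ring,
      show ∀ u : V, 1 - (Y u r.1 + D u r.1)
        = (1 - Y u r.1) - D u r.1 from fun u => by ring]
    have := prod_affine_one (Finset.range (k+1))
      (fun k' => 1 - Y (r.2.getD k' default) r.1)
      (fun k' => D (r.2.getD k' default) r.1)
    by_cases hex : ∃ k₀ ∈ Finset.range (k+1), D (r.2.getD k₀ default) r.1 ≠ 0
    · obtain ⟨k₀, hk₀, hDk₀⟩ := hex
      have hcond : ∀ k' ∈ Finset.range (k+1), k' ≠ k₀ →
          D (r.2.getD k' default) r.1 = 0 := by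
        intro k' hk' hne
        by_contra hDk'
        have heq : r.2.getD k' default = r.2.getD k₀ default :=
          hD r.1 _ _ hDk' hDk₀
        have hb1 := hlen k' hk'
        have hb2 := hlen k₀ hk₀
        rw [r.2.getD_eq_getElem default hb1, r.2.getD_eq_getElem default hb2] at heq
        exact hne ((List.Nodup.getElem_inj_iff (hsimple r hr)).mp heq)
      exact this k₀ hcond t
    · push_neg at hex
      have hcond : ∀ k' ∈ Finset.range (k+1), k' ≠ 0 →
          D (r.2.getD k' default) r.1 = 0 := by
        intro k' hk' _; exact hex k' hk'
      exact this 0 hcond t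
  rw [key]; ring


/-- one step of pipage rounding: given `Y ∈ D2` with two fractional entries
`y_{vi}, y_{vi'}` (`i ≠ i'`), there is `Y' ∈ D2` agreeing with `Y` elsewhere, preserving
`y_{vi} + y_{vi'}`, making at least one of the two entries integral, and with `F(Y') ≥ F(Y)`. -/
theorem stmt14 {V C : Type*} [Fintype V] [Fintype C] [Inhabited V]
    (R : Finset (C × List V)) (lam : C × List V → ℝ) (w : V → V → ℝ)
    (hpath : ∀ r ∈ R, r.2 ≠ []) (hlam : ∀ r ∈ R, 0 ≤ lam r) (hw : ∀ u v, 0 ≤ w u v)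
    (hsimple : ∀ r ∈ R, r.2.Nodup)
    (c : V → ℕ) (S : C → Finset V)
    (Y : V → C → ℝ) (hY : memD2 c S Y)
    (v : V) (i i' : C) (hii : i ≠ i')
    (h1 : 0 < Y v i) (h2 : Y v i < 1) (h3 : 0 < Y v i') (h4 : Y v i' < 1) :
    ∃ Y' : V → C → ℝ, memD2 c S Y' ∧
      (∀ u j, (u, j) ≠ (v, i) → (u, j) ≠ (v, i') → Y' u j = Y u j) ∧
      Y' v i + Y' v i' = Y v i + Y v i' ∧
      (Y' v i = 0 ∨ Y' v i = 1 ∨ Y' v i' = 0 ∨ Y' v i' = 1) ∧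
      cachingGain R lam w Y ≤ cachingGain R lam w Y' := by
  classical
  set D : V → C → ℝ := fun u j =>
    if u = v ∧ j = i then 1 else if u = v ∧ j = i' then -1 else 0 with hDdef
  have hD : ∀ (j : C) (u u' : V), D u j ≠ 0 → D u' j ≠ 0 → u = u' := by
    intro j u u' hu hu'
    simp only [hDdef] at hu hu'
    by_cases h : u = v
    · by_cases h' : u' = v
      · rw [h, h']
      · exfalso; apply hu'; simp [h']
    · exfalso; apply hu; simp [h]
  have hDvi : D v i = 1 := by simp [hDdef]
  have hDvi' : D v i' = -1 := by simp [hDdef, Ne.symm hii]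
  have hDother : ∀ u j, (u, j) ≠ (v, i) → (u, j) ≠ (v, i') → D u j = 0 := by
    intro u j hn1 hn2
    simp only [hDdef]
    rw [if_neg, if_neg]
    · rintro ⟨rfl, rfl⟩; exact hn2 rfl
    · rintro ⟨rfl, rfl⟩; exact hn1 rfl
  have hDsum : ∀ u, ∑ j, D u j = 0 := by
    intro u
    by_cases h : u = v
    · subst h
      have hsplit : ∀ j : C, D u j
          = (if j = i then (1:ℝ) else 0) + (if j = i' then (-1:ℝ) else 0) := by
        intro j
        by_cases hj : j = i
        · subst hj; rw [hDvi, if_pos rfl, if_neg hii]; ring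
        · by_cases hj' : j = i'
          · subst hj'; rw [hDvi', if_neg hj, if_pos rfl]; ring
          · rw [hDother u j (by simp [hj]) (by simp [hj']), if_neg hj, if_neg hj']; ring
      simp only [hsplit, Finset.sum_add_distrib, Finset.sum_ite_eq' Finset.univ,
        Finset.mem_univ, if_true]
      ring
    · have hz : ∀ j : C, D u j = 0 := by intro j; simp [hDdef, h]
      simp [hz]
  have haff : ∀ t : ℝ, cachingGain R lam w (fun u j => Y u j + t * D u j)
      = cachingGain R lam w Y
        + t * (cachingGain R lam w (fun u j => Y u j + D u j) - cachingGain R lam w Y) := by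
    intro t
    rw [gain_affine R lam w hsimple Y D hD t]; ring
  set A : ℝ := cachingGain R lam w (fun u j => Y u j + D u j) - cachingGain R lam w Y with hA
  set t : ℝ := if 0 ≤ A then min (1 - Y v i) (Y v i') else -(min (Y v i) (1 - Y v i')) with ht
  have htfacts : (0 ≤ A ∧ 0 ≤ t ∧ t ≤ 1 - Y v i ∧ t ≤ Y v i') ∨
      (¬ 0 ≤ A ∧ t ≤ 0 ∧ -t ≤ Y v i ∧ -t ≤ 1 - Y v i') := by
    by_cases h : 0 ≤ A
    · left
      refine ⟨h, ?_, ?_, ?_⟩ <;> rw [ht, if_pos h]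
      · exact le_min (by linarith) h3.le
      · exact min_le_left _ _
      · exact min_le_right _ _
    · right
      refine ⟨h, ?_, ?_, ?_⟩ <;> rw [ht, if_neg h]
      · have : 0 ≤ min (Y v i) (1 - Y v i') := le_min h1.le (by linarith)
        linarith
      · simpa using min_le_left (Y v i) (1 - Y v i')
      · simpa using min_le_right (Y v i) (1 - Y v i')
  have htA : 0 ≤ t * A := by
    rcases htfacts with ⟨h, h0, _, _⟩ | ⟨h, h0, _, _⟩
    · exact mul_nonneg h0 h
    · push_neg at h; nlinarith
  refine ⟨fun u j => Y u j + t * D u j, ⟨?_, ?_, ?_⟩, ?_, ?_, ?_, ?_⟩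
  · -- bounds
    intro u j
    dsimp only
    by_cases hc1 : (u, j) = (v, i)
    · have he : u = v ∧ j = i := Prod.mk.injEq .. ▸ hc1
      rw [he.1, he.2, hDvi, mul_one]
      rcases htfacts with ⟨_, h0, hb, _⟩ | ⟨_, h0, hb, _⟩ <;> constructor <;> linarith
    · by_cases hc2 : (u, j) = (v, i')
      · have he : u = v ∧ j = i' := Prod.mk.injEq .. ▸ hc2
        rw [he.1, he.2, hDvi', mul_neg_one]
        rcases htfacts with ⟨_, h0, _, hb⟩ | ⟨_, h0, _, hb⟩ <;> constructor <;> linarith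
      · rw [hDother u j hc1 hc2, mul_zero, add_zero]
        exact hY.1 u j
  · -- row sums
    intro u
    dsimp only
    rw [Finset.sum_add_distrib, ← Finset.mul_sum, hDsum u, mul_zero, add_zero]
    exact hY.2.1 u
  · -- sources
    intro j u hu
    dsimp only
    have hYu := hY.2.2 j u hu
    have hz : D u j = 0 := by
      apply hDother
      · rintro h; rw [Prod.mk.injEq] at h; obtain ⟨rfl, rfl⟩ := h; linarith
      · rintro h; rw [Prod.mk.injEq] at h; obtain ⟨rfl, rfl⟩ := h; linarith
    rw [hz, mul_zero, add_zero, hYu]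
  · intro u j hn1 hn2
    dsimp only
    rw [hDother u j hn1 hn2, mul_zero, add_zero]
  · dsimp only
    rw [hDvi, hDvi']; ring
  · -- integrality
    dsimp only
    by_cases h : 0 ≤ A
    · rcases min_cases (1 - Y v i) (Y v i') with ⟨he, _⟩ | ⟨he, _⟩
      · right; left; rw [hDvi, ht, if_pos h, he]; ring
      · right; right; left; rw [hDvi', ht, if_pos h, he]; ring
    · rcases min_cases (Y v i) (1 - Y v i') with ⟨he, _⟩ | ⟨he, _⟩
      · left; rw [hDvi, ht, if_neg h, he]; ring
      · right; right; right; rw [hDvi', ht, if_neg h, he]; ring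
  · rw [haff t]; linarith
end
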